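/- arXiv:2409.07103 — 6 statements merged into one kernel-verified Lean document; each statement's English description precedes it below -/
import Mathlib

section
/- Let (A_i)_{i∈I} be a countable family of subsets of ℕ, each with positive lower density, and let (N_i)_{i∈I} be a family of positive integers indexed by the same countable set I. Then there exists a family (B_i)_{i∈I} of pairwise disjoint subsets of ℕ, each with positive lower density, such that (a) B_i ⊆ A_i and min(B_i) ≥ N_i for all i ∈ I, and (b) for any i, j ∈ I and any n ∈ B_i, m ∈ B_j with n ≠ m, one has |n − m| ≥ N_i + N_j. -/
/-!
Enumerate the index set injectively by `ℕ` (padding with `A = univ`, `N = 1`) and treat the sets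
in that order. In the greedy `c`-separated subset `S` of `A ∩ [c, ∞)`, every point of `A` beyond
`c` lies less than `c` after a point of `S`, so `S` keeps lower density at least `d(A) / c`. Let
`B k` be `S k` minus the `(N k + N l)`-neighbourhoods of all later `S l`. A `c`-separated set
has at most `n / c` points up to `n`, so such a neighbourhood has density at most `4 (N k + N l) / c l`; letting
`c l` grow fast compared with every earlier `c k / d(A k)` makes the removed parts cost at most
half of `d(A k) / c k`. Points of `B k` are `2 N k`-separated because `c k > 2 N k`, and points of
`B k` and of a later `B l` are far apart because of the removal.
-/

open Filter Topology Set
open scoped Classical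

noncomputable def lowerDensity (A : Set ℕ) : ℝ :=
  Filter.atTop.liminf fun N : ℕ => (((Finset.Icc 1 N).filter (· ∈ A)).card : ℝ) / N

noncomputable def countingFn (A : Set ℕ) (n : ℕ) : ℕ := ((Finset.Icc 1 n).filter (· ∈ A)).card

lemma countingFn_le (A : Set ℕ) (n : ℕ) : countingFn A n ≤ n :=
  (Finset.card_filter_le _ _).trans (by simp)

lemma countingFn_mono {A B : Set ℕ} (h : A ⊆ B) (n : ℕ) : countingFn A n ≤ countingFn B n :=
  Finset.card_le_card (Finset.monotone_filter_right _ fun _ _ hx => h hx)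

lemma countingFn_union_le (A B : Set ℕ) (n : ℕ) :
    countingFn (A ∪ B) n ≤ countingFn A n + countingFn B n := by
  unfold countingFn
  simp only [Set.mem_union, Finset.filter_or]
  exact Finset.card_union_le _ _

lemma countingFn_univ (n : ℕ) : countingFn univ n = n := by
  simp [countingFn]

lemma countingFn_iUnion_le {ι : Type*} (X : ι → Set ℕ) (n : ℕ) {ε : ι → ℝ} (hε : Summable ε)
    (h : ∀ i, (countingFn (X i) n : ℝ) ≤ ε i) : (countingFn (⋃ i, X i) n : ℝ) ≤ ∑' i, ε i := by
  set T := (Finset.Icc 1 n).filter (· ∈ ⋃ i, X i)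
  choose idx hidx using fun x (hx : x ∈ T) => mem_iUnion.1 (Finset.mem_filter.1 hx).2
  set F := T.attach.image fun x => idx x.1 x.2
  have hcover : T ⊆ F.biUnion fun i => (Finset.Icc 1 n).filter (· ∈ X i) := fun x hx =>
    Finset.mem_biUnion.2 ⟨idx x hx, Finset.mem_image.2 ⟨⟨x, hx⟩, Finset.mem_attach _ _, rfl⟩,
      Finset.mem_filter.2 ⟨(Finset.mem_filter.1 hx).1, hidx x hx⟩⟩
  calc (countingFn (⋃ i, X i) n : ℝ) ≤ ∑ i ∈ F, (countingFn (X i) n : ℝ) := by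
        exact_mod_cast (Finset.card_le_card hcover).trans Finset.card_biUnion_le
    _ ≤ ∑ i ∈ F, ε i := Finset.sum_le_sum fun i _ => h i
    _ ≤ ∑' i, ε i := hε.sum_le_tsum _ fun i _ => (Nat.cast_nonneg _).trans (h i)

lemma countingFn_div_le_one (A : Set ℕ) (n : ℕ) : (countingFn A n : ℝ) / n ≤ 1 :=
  div_le_one_of_le₀ (by exact_mod_cast countingFn_le A n) n.cast_nonneg

lemma le_lowerDensity_of_eventually {A : Set ℕ} {r : ℝ}
    (h : ∀ᶠ n in atTop, r ≤ (countingFn A n : ℝ) / n) : r ≤ lowerDensity A :=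
  le_liminf_of_le (isBoundedUnder_of ⟨1, countingFn_div_le_one A⟩).isCoboundedUnder_ge h

lemma eventually_lt_of_lt_lowerDensity {A : Set ℕ} {r : ℝ} (h : r < lowerDensity A) :
    ∀ᶠ n in atTop, r < (countingFn A n : ℝ) / n :=
  eventually_lt_of_lt_liminf h (isBoundedUnder_of ⟨0, fun _ => by positivity⟩)

lemma lowerDensity_le_one (A : Set ℕ) : lowerDensity A ≤ 1 :=
  liminf_le_of_frequently_le (Frequently.of_forall (countingFn_div_le_one A))
    (isBoundedUnder_of ⟨0, fun _ => by positivity⟩)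

lemma lowerDensity_univ : lowerDensity univ = 1 := by
  refine (lowerDensity_le_one _).antisymm (le_lowerDensity_of_eventually ?_)
  filter_upwards [eventually_gt_atTop 0] with n hn
  rw [countingFn_univ, div_self (by positivity)]

lemma lowerDensity_le_mul_add {A S : Set ℕ} {c ε b : ℝ} (hc : 0 < c)
    (h : ∀ n, (countingFn A n : ℝ) ≤ c * countingFn S n + ε * n + b) :
    lowerDensity A ≤ c * lowerDensity S + ε := by
  refine le_of_forall_lt_imp_le_of_dense fun r hr => ?_
  obtain ⟨r', hr', hr'A⟩ := exists_between hr
  suffices (r - ε) / c ≤ lowerDensity S by rw [div_le_iff₀ hc] at this; linarith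
  apply le_lowerDensity_of_eventually
  filter_upwards [eventually_lt_of_lt_lowerDensity hr'A,
    eventually_ge_atTop ⌈b / (r' - r)⌉₊, eventually_gt_atTop 0] with n hA hbn hn
  have hn : (0 : ℝ) < n := by exact_mod_cast hn
  have hb : b ≤ (r' - r) * n := by
    rw [← div_le_iff₀' (sub_pos.2 hr')]; exact Nat.ceil_le.1 hbn
  rw [lt_div_iff₀ hn] at hA
  rw [div_le_div_iff₀ hc hn]
  nlinarith [h n]

def greedySep (A : Set ℕ) (c n : ℕ) : Prop :=
  n ∈ A ∧ c ≤ n ∧ ∀ m < n, greedySep A c m → m + c ≤ n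
termination_by n

lemma greedySep_iff {A : Set ℕ} {c n : ℕ} :
    greedySep A c n ↔ n ∈ A ∧ c ≤ n ∧ ∀ m < n, greedySep A c m → m + c ≤ n := by
  rw [greedySep]

namespace greedySep

variable {A : Set ℕ} {c m n : ℕ}

lemma mem (h : greedySep A c n) : n ∈ A := (greedySep_iff.1 h).1

lemma le (h : greedySep A c n) : c ≤ n := (greedySep_iff.1 h).2.1

lemma add_le (hm : greedySep A c m) (hn : greedySep A c n) (hmn : m < n) : m + c ≤ n :=
  (greedySep_iff.1 hn).2.2 m hmn hm

lemma exists_near (hc : 0 < c) (hA : n ∈ A) (hn : c ≤ n) :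
    ∃ m ≤ n, greedySep A c m ∧ n < m + c := by
  by_cases h : greedySep A c n
  · exact ⟨n, le_rfl, h, by omega⟩
  · rw [greedySep_iff] at h
    push Not at h
    obtain ⟨m, hmn, hm, hlt⟩ := h hA hn
    exact ⟨m, hmn.le, hm, hlt⟩

end greedySep

lemma countingFn_le_mul_countingFn_greedySep (A : Set ℕ) {c : ℕ} (hc : 0 < c) (n : ℕ) :
    countingFn A n ≤ c * countingFn {m | greedySep A c m} n + c := by
  set G := (Finset.Icc 1 n).filter (· ∈ {m | greedySep A c m})
  have hcover : (Finset.Icc 1 n).filter (· ∈ A) ⊆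
      Finset.range c ∪ G.biUnion fun m => Finset.Ico m (m + c) := by
    intro x hx
    rw [Finset.mem_filter, Finset.mem_Icc] at hx
    rcases lt_or_ge x c with hxc | hxc
    · exact Finset.mem_union_left _ (Finset.mem_range.2 hxc)
    obtain ⟨m, hmx, hm, hxm⟩ := greedySep.exists_near hc hx.2 hxc
    refine Finset.mem_union_right _ (Finset.mem_biUnion.2 ⟨m, ?_, Finset.mem_Ico.2 ⟨hmx, hxm⟩⟩)
    exact Finset.mem_filter.2 ⟨Finset.mem_Icc.2 ⟨hc.trans_le hm.le, hmx.trans hx.1.2⟩, hm⟩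
  have hG : (G.biUnion fun m => Finset.Ico m (m + c)).card ≤ G.card * c :=
    Finset.card_biUnion_le_card_mul _ _ _ fun m _ => by simp
  have := (Finset.card_le_card hcover).trans (Finset.card_union_le _ _)
  rw [Finset.card_range] at this
  unfold countingFn
  linarith

lemma lowerDensity_div_le_lowerDensity_greedySep (A : Set ℕ) {c : ℕ} (hc : 0 < c) :
    lowerDensity A / c ≤ lowerDensity {m | greedySep A c m} := by
  have hc' : (0 : ℝ) < c := by exact_mod_cast hc
  rw [div_le_iff₀' hc']
  simpa using lowerDensity_le_mul_add (ε := 0) (b := c) hc' fun n => by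
    simpa using (Nat.cast_le (α := ℝ)).2 (countingFn_le_mul_countingFn_greedySep A hc n)

lemma mul_countingFn_le_of_separated {S : Set ℕ} {c : ℕ} (hc : 0 < c) (hS : ∀ s ∈ S, c ≤ s)
    (hsep : ∀ m ∈ S, ∀ n ∈ S, m < n → m + c ≤ n) (n : ℕ) : c * countingFn S n ≤ n := by
  have hdiv : ∀ a ∈ S, ∀ b ∈ S, a < b → a / c < b / c := fun a ha b hb hab =>
    calc a / c < (a + c) / c := by rw [Nat.add_div_right a hc]; omega
      _ ≤ b / c := Nat.div_le_div_right (hsep a ha b hb hab)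
  have hinj : countingFn S n ≤ (Finset.Icc 1 (n / c)).card := by
    refine Finset.card_le_card_of_injOn (· / c) (fun a ha => ?_) fun a ha b hb hab => ?_
    · simp only [Finset.coe_filter, Finset.mem_Icc, Set.mem_ofPred_eq] at ha
      exact Finset.mem_Icc.2 ⟨(Nat.one_le_div_iff hc).2 (hS a ha.2), Nat.div_le_div_right ha.1.2⟩
    · simp only [Finset.coe_filter, Set.mem_ofPred_eq] at ha hb
      rcases lt_trichotomy a b with h | h | h
      · exact absurd hab (hdiv a ha.2 b hb.2 h).ne
      · exact h
      · exact absurd hab (hdiv b hb.2 a ha.2 h).ne'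
  rw [Nat.card_Icc, Nat.add_sub_cancel] at hinj
  exact (Nat.mul_le_mul_left c hinj).trans (Nat.mul_div_le n c)

def nbhd (S : Set ℕ) (ρ : ℕ) : Set ℕ := {x | ∃ s ∈ S, |(x : ℤ) - s| < ρ}

lemma countingFn_nbhd_le {S : Set ℕ} (hS : ∀ s ∈ S, 1 ≤ s) (ρ n : ℕ) :
    countingFn (nbhd S ρ) n ≤ countingFn S (n + ρ) * (2 * ρ) := by
  have hcover : (Finset.Icc 1 n).filter (· ∈ nbhd S ρ) ⊆
      ((Finset.Icc 1 (n + ρ)).filter (· ∈ S)).biUnion fun s => Finset.Ico (s + 1 - ρ) (s + ρ) := by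
    intro x hx
    obtain ⟨hx, s, hs, hxs⟩ := Finset.mem_filter.1 hx
    have := hS s hs
    rw [Finset.mem_Icc] at hx
    rw [abs_lt] at hxs
    exact Finset.mem_biUnion.2 ⟨s, Finset.mem_filter.2 ⟨Finset.mem_Icc.2 ⟨by omega, by omega⟩, hs⟩,
      Finset.mem_Ico.2 ⟨by omega, by omega⟩⟩
  exact (Finset.card_le_card hcover).trans
    (Finset.card_biUnion_le_card_mul _ _ _ fun s _ => by rw [Nat.card_Ico]; omega)

lemma countingFn_nbhd_le_mul {S : Set ℕ} {c ρ : ℕ} {δ : ℝ} (hc : 0 < c) (hS : ∀ s ∈ S, c ≤ s)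
    (hsep : ∀ m ∈ S, ∀ n ∈ S, m < n → m + c ≤ n) (hρ : 4 * ρ ≤ δ * c) (n : ℕ) :
    (countingFn (nbhd S ρ) n : ℝ) ≤ δ * n := by
  have hn : (0 : ℝ) ≤ n := n.cast_nonneg
  have hc' : (0 : ℝ) < c := by exact_mod_cast hc
  rcases le_or_gt 1 δ with hδ | hδ
  · have : (countingFn (nbhd S ρ) n : ℝ) ≤ n := by exact_mod_cast countingFn_le _ n
    nlinarith
  have hρc : 2 * ρ ≤ c := by
    have : (2 * ρ : ℝ) ≤ c := by nlinarith
    exact_mod_cast this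
  have hnbhd := countingFn_nbhd_le (fun s hs => hc.trans_le (hS s hs)) ρ n
  have hS := mul_countingFn_le_of_separated hc hS hsep (n + ρ)
  -- a point of `S` below `n + ρ` forces `ρ ≤ n`, so `n + ρ ≤ 2 * n`
  have key : c * countingFn (nbhd S ρ) n ≤ 4 * ρ * n := by
    rcases Nat.eq_zero_or_pos (countingFn S (n + ρ)) with h0 | hpos
    · simp_all
    · have hρn : ρ ≤ n := by nlinarith
      nlinarith
  have key' : (c * countingFn (nbhd S ρ) n : ℝ) ≤ 4 * ρ * n := by exact_mod_cast key
  nlinarith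

lemma exists_seq_ge_and_mul_le (a : ℕ → ℕ → ℝ) (b : ℕ → ℕ) :
    ∃ c : ℕ → ℕ, (∀ k, b k ≤ c k) ∧ ∀ k l, k < l → a k l * c k ≤ c l := by
  set f : ℕ → ℕ := fun l => b l + ∑ k ∈ Finset.range l, ⌈a k l⌉₊ + 1
  set c : ℕ → ℕ := fun l => ∏ m ∈ Finset.range (l + 1), f m
  have hf : ∀ l, 1 ≤ f l := fun l => by simp only [f]; omega
  have hc_succ : ∀ l, c (l + 1) = c l * f (l + 1) := fun l => Finset.prod_range_succ _ _
  have hc_mono : Monotone c :=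
    monotone_nat_of_le_succ fun l => by rw [hc_succ]; exact Nat.le_mul_of_pos_right _ (hf _)
  refine ⟨c, fun k => ?_, fun k l hkl => ?_⟩
  · calc b k ≤ f k := by simp only [f]; omega
      _ ≤ c k := Finset.single_le_prod' (fun m _ => hf m) (Finset.self_mem_range_succ k)
  · obtain ⟨l, rfl⟩ : ∃ l', l = l' + 1 := ⟨l - 1, by omega⟩
    have ha : ⌈a k (l + 1)⌉₊ ≤ f (l + 1) :=
      calc ⌈a k (l + 1)⌉₊ ≤ ∑ k ∈ Finset.range (l + 1), ⌈a k (l + 1)⌉₊ :=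
            Finset.single_le_sum (f := fun k => ⌈a k (l + 1)⌉₊) (fun _ _ => Nat.zero_le _)
              (Finset.mem_range.2 hkl)
        _ ≤ f (l + 1) := by simp only [f]; omega
    calc a k (l + 1) * c k ≤ ⌈a k (l + 1)⌉₊ * c k := by gcongr; exact Nat.le_ceil _
      _ ≤ c (l + 1) := by
        rw [hc_succ, mul_comm (c l)]
        exact_mod_cast Nat.mul_le_mul ha (hc_mono (by omega))

lemma sub_tsum_le_lowerDensity_sdiff (S : Set ℕ) {X : ℕ → Set ℕ} {ε : ℕ → ℝ} (hε : Summable ε)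
    (hX : ∀ l n, (countingFn (X l) n : ℝ) ≤ ε l * n) :
    lowerDensity S - ∑' l, ε l ≤ lowerDensity (S \ ⋃ l, X l) := by
  suffices lowerDensity S ≤ 1 * lowerDensity (S \ ⋃ l, X l) + ∑' l, ε l by linarith
  refine lowerDensity_le_mul_add (b := 0) one_pos fun n => ?_
  have hsplit : (countingFn S n : ℝ) ≤ countingFn (S \ ⋃ l, X l) n + countingFn (⋃ l, X l) n := by
    exact_mod_cast (countingFn_mono (subset_sdiff_union S _) n).trans (countingFn_union_le _ _ n)
  have hU := countingFn_iUnion_le X n (hε.mul_right (n : ℝ)) fun l => hX l n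
  rw [tsum_mul_right] at hU
  linarith

section Trim

variable (S : ℕ → Set ℕ) (N : ℕ → ℕ)

def trim (k : ℕ) : Set ℕ := S k \ ⋃ l > k, nbhd (S l) (N k + N l)

variable {S N}

lemma trim_subset (k : ℕ) : trim S N k ⊆ S k := sdiff_subset

lemma le_abs_sub_of_mem_trim {k l n m : ℕ} (hkl : k < l) (hn : n ∈ trim S N k) (hm : m ∈ S l) :
    (N k + N l : ℤ) ≤ |(n : ℤ) - m| := by
  by_contra! h
  exact hn.2 (mem_biUnion (x := l) hkl ⟨m, hm, by exact_mod_cast h⟩)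

lemma trim_disjoint (hN : ∀ k, 0 < N k) {k l : ℕ} (hkl : k ≠ l) :
    Disjoint (trim S N k) (trim S N l) := by
  refine Set.disjoint_left.2 fun x hk hl => ?_
  have := hN k
  rcases hkl.lt_or_gt with h | h
  · have := le_abs_sub_of_mem_trim h hk (trim_subset l hl)
    simp only [sub_self, abs_zero] at this; omega
  · have := le_abs_sub_of_mem_trim h hl (trim_subset k hk)
    simp only [sub_self, abs_zero] at this; omega

lemma le_abs_sub_of_mem_trim_of_ne
    (hS : ∀ k, ∀ m ∈ S k, ∀ n ∈ S k, m < n → m + 2 * N k ≤ n)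
    {k l n m : ℕ} (hn : n ∈ trim S N k) (hm : m ∈ trim S N l) (hnm : n ≠ m) :
    (N k + N l : ℤ) ≤ |(n : ℤ) - m| := by
  rcases lt_trichotomy k l with h | rfl | h
  · exact le_abs_sub_of_mem_trim h hn (trim_subset l hm)
  · rcases hnm.lt_or_gt with h | h
    · have := hS k n (trim_subset k hn) m (trim_subset k hm) h
      rw [abs_sub_comm, abs_of_pos (by omega)]; omega
    · have := hS k m (trim_subset k hm) n (trim_subset k hn) h
      rw [abs_of_pos (by omega)]; omega
  · rw [abs_sub_comm, add_comm]
    exact le_abs_sub_of_mem_trim h hm (trim_subset k hn)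

lemma sub_tsum_le_lowerDensity_trim (k : ℕ) {ε : ℕ → ℝ} (hε : Summable ε) (hε_nonneg : 0 ≤ ε)
    (h : ∀ l, k < l → ∀ n, (countingFn (nbhd (S l) (N k + N l)) n : ℝ) ≤ ε l * n) :
    lowerDensity (S k) - ∑' l, ε l ≤ lowerDensity (trim S N k) := by
  refine sub_tsum_le_lowerDensity_sdiff (S k) hε fun l n => ?_
  by_cases hkl : k < l
  · simpa [hkl] using h l hkl n
  · simpa [hkl, countingFn] using mul_nonneg (hε_nonneg l) n.cast_nonneg

end Trim

lemma extend_apply_of_forall {α β γ : Type*} {f : α → β} {g : α → γ} {e' : β → γ} {p : γ → Prop}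
    (hg : ∀ a, p (g a)) (he' : ∀ b, p (e' b)) (b : β) : p (Function.extend f g e' b) := by
  rw [Function.extend_def]
  split_ifs
  exacts [hg _, he' b]

theorem exists_separated_subsets_nat (A : ℕ → Set ℕ) (N : ℕ → ℕ)
    (hA : ∀ k, 0 < lowerDensity (A k)) (hN : ∀ k, 0 < N k) :
    ∃ B : ℕ → Set ℕ,
      (∀ k l, k ≠ l → Disjoint (B k) (B l)) ∧
      (∀ k, 0 < lowerDensity (B k)) ∧
      (∀ k, B k ⊆ A k) ∧
      (∀ k, ∀ n ∈ B k, N k ≤ n) ∧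
      (∀ k l, ∀ n ∈ B k, ∀ m ∈ B l, n ≠ m → (N k + N l : ℤ) ≤ |(n : ℤ) - (m : ℤ)|) := by
  -- the factor `2 ^ (l + 4) / d(A k)` makes the neighbourhood of `S l` removed from `S k` cost
  -- density at most `d(A k) / (c k * 2 ^ (l + 2))`, and these sum to `d(A k) / (2 * c k)`
  obtain ⟨c, hNc, hc⟩ := exists_seq_ge_and_mul_le
    (fun k l => 2 ^ (l + 4) * (N k + N l) / lowerDensity (A k)) (fun k => 2 * N k + 1)
  have hc_pos : ∀ k, 0 < c k := fun k => (Nat.succ_pos _).trans_le (hNc k)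
  set S := fun k => {n | greedySep (A k) (c k) n}
  have hS_ge : ∀ k, ∀ s ∈ S k, c k ≤ s := fun k s hs => greedySep.le hs
  have hS_sep : ∀ k, ∀ m ∈ S k, ∀ n ∈ S k, m < n → m + c k ≤ n :=
    fun k m hm n hn => greedySep.add_le hm hn
  refine ⟨trim S N, fun k l => trim_disjoint hN, fun k => ?_,
    fun k n hn => greedySep.mem (trim_subset (S := S) k hn), fun k n hn => ?_, fun k l n hn m hm =>
      le_abs_sub_of_mem_trim_of_ne (fun k m hm n hn hmn => ?_) hn hm⟩
  · have hd := hA k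
    have hck : (0 : ℝ) < c k := by exact_mod_cast hc_pos k
    obtain ⟨δ, hδ⟩ : ∃ δ, δ = lowerDensity (A k) / c k / 2 := ⟨_, rfl⟩
    have hδ_pos : 0 < δ := hδ ▸ by positivity
    have hgrowth : ∀ l, k < l → 4 * ((N k + N l : ℕ) : ℝ) ≤ δ / 2 / 2 ^ l * c l := fun l hkl =>
      calc 4 * ((N k + N l : ℕ) : ℝ)
          = δ / 2 / 2 ^ l * (2 ^ (l + 4) * (N k + N l) / lowerDensity (A k) * c k) := by
            rw [hδ, pow_add]; push_cast; field_simp; ring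
        _ ≤ δ / 2 / 2 ^ l * c l := by gcongr; exact hc k l hkl
    have hB := sub_tsum_le_lowerDensity_trim k (summable_geometric_two' δ) (fun l => by positivity)
      fun l hkl => countingFn_nbhd_le_mul (hc_pos l) (hS_ge l) (hS_sep l) (hgrowth l hkl)
    rw [tsum_geometric_two'] at hB
    linarith [lowerDensity_div_le_lowerDensity_greedySep (A k) (hc_pos k)]
  · have := hS_ge k n (trim_subset (S := S) k hn); have := hNc k; omega
  · have := hS_sep k m hm n hn hmn; have := hNc k; omega

/-- Given a countable family `(Aᵢ)` of subsets of `ℕ` with positive lower density and a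
family `(Nᵢ)` of positive integers, there are pairwise disjoint sets `Bᵢ ⊆ Aᵢ` of positive
lower density with `min Bᵢ ≥ Nᵢ` and such that distinct elements `n ∈ Bᵢ`, `m ∈ Bⱼ`
satisfy `|n − m| ≥ Nᵢ + Nⱼ`. -/
theorem separated_subsets_of_positive_lower_density
    {I : Type*} [Countable I] (A : I → Set ℕ) (N : I → ℕ)
    (hA : ∀ i, 0 < lowerDensity (A i)) (hN : ∀ i, 0 < N i) :
    ∃ B : I → Set ℕ,
      (∀ i j, i ≠ j → Disjoint (B i) (B j)) ∧
      (∀ i, 0 < lowerDensity (B i)) ∧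
      (∀ i, B i ⊆ A i) ∧
      (∀ i, ∀ n ∈ B i, N i ≤ n) ∧
      (∀ i j, ∀ n ∈ B i, ∀ m ∈ B j, n ≠ m → (N i + N j : ℤ) ≤ |(n : ℤ) - (m : ℤ)|) := by
  obtain ⟨e, he⟩ := Countable.exists_injective_nat I
  obtain ⟨B, hdisj, hdens, hsub, hmin, hsep⟩ := exists_separated_subsets_nat
    (Function.extend e A fun _ => univ) (Function.extend e N fun _ => 1)
    (extend_apply_of_forall (p := fun s => 0 < lowerDensity s) hA
      fun _ => lowerDensity_univ ▸ one_pos)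
    (extend_apply_of_forall (p := (0 < ·)) hN fun _ => one_pos)
  refine ⟨B ∘ e, fun i j hij => hdisj _ _ (he.ne hij), fun i => hdens _, fun i => ?_,
    fun i => ?_, fun i j => ?_⟩
  · simpa [he.extend_apply] using hsub (e i)
  · simpa [he.extend_apply] using hmin (e i)
  · simpa [he.extend_apply] using hsep (e i) (e j)
end

section
/- Let F be a Furstenberg family, let X₁ and X₂ be Polish topological vector spaces, and let T₁, T₂ be continuous linear operators on X₁ and X₂ respectively. If T₁ is F-hypercyclic and T₂ is hereditarily F-hypercyclic, then the direct sum T₁ ⊕ T₂ acting on X₁ × X₂ is F-hypercyclic. Moreover, if both T₁ and T₂ are hereditarily F-hypercyclic, then T₁ ⊕ T₂ is hereditarily F-hypercyclic. -/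
open Filter Topology Set
open scoped Classical

/-- A Furstenberg family: a collection of non-empty subsets of `ℕ` which is hereditary
upwards. -/
def IsFurstenbergFamily (F : Set (Set ℕ)) : Prop :=
  (∀ A ∈ F, A.Nonempty) ∧ ∀ A ∈ F, ∀ A' : Set ℕ, A ⊆ A' → A' ∈ F

/-- The visit set `N_T(x,V) = {n ∈ ℕ : Tⁿ x ∈ V}`. -/
def visitSet {X : Type*} [TopologicalSpace X] [AddCommGroup X] [Module ℝ X]
    (T : X →L[ℝ] X) (x : X) (V : Set X) : Set ℕ :=
  {n : ℕ | (T ^ n) x ∈ V}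

/-- `T` is `F`-hypercyclic: some vector `x` has `N_T(x,V) ∈ F` for every non-empty open `V`. -/
def FHypercyclic (F : Set (Set ℕ)) {X : Type*} [TopologicalSpace X] [AddCommGroup X]
    [Module ℝ X] (T : X →L[ℝ] X) : Prop :=
  ∃ x : X, ∀ V : Set X, IsOpen V → V.Nonempty → visitSet T x V ∈ F

/-- `T` is hereditarily `F`-hypercyclic. -/
def HereditarilyFHypercyclic (F : Set (Set ℕ)) {X : Type*} [TopologicalSpace X]
    [AddCommGroup X] [Module ℝ X] (T : X →L[ℝ] X) : Prop :=
  ∀ (I : Type) [Countable I] (V : I → Set X) (A : I → Set ℕ),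
    (∀ i, IsOpen (V i)) → (∀ i, (V i).Nonempty) → (∀ i, A i ∈ F) →
    ∃ x : X, ∀ i, visitSet T x (V i) ∩ A i ∈ F

/-!
The visit set of `T₁ ⊕ T₂` at `(x₁, x₂)` in a box `U × V` is `N_{T₁}(x₁, U) ∩ N_{T₂}(x₂, V)`,
and every non-empty open set contains a non-empty open box. If `x₁` is `F`-hypercyclic for `T₁`,
hereditary `F`-hypercyclicity of `T₂` gives one `x₂` with `N_{T₂}(x₂, V) ∩ N_{T₁}(x₁, U) ∈ F`
for all the countably many pairs of basic open sets `U`, `V`; upward heredity of `F` does the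
rest. For the hereditary statement, with targets `U_i × V_i ⊆ W_i` and sets `A_i`, first choose
`x₁` for `(U_i, A_i)`, then `x₂` for `(V_i, N_{T₁}(x₁, U_i) ∩ A_i)`.
-/

theorem IsFurstenbergFamily.mono {F : Set (Set ℕ)} (hF : IsFurstenbergFamily F)
    {A A' : Set ℕ} (hA : A ∈ F) (h : A ⊆ A') : A' ∈ F :=
  hF.2 A hA A' h

section VisitSet

variable {X X₁ X₂ : Type*} [TopologicalSpace X] [AddCommGroup X] [Module ℝ X]
  [TopologicalSpace X₁] [AddCommGroup X₁] [Module ℝ X₁]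
  [TopologicalSpace X₂] [AddCommGroup X₂] [Module ℝ X₂]

theorem visitSet_mono (T : X →L[ℝ] X) (x : X) {V W : Set X} (h : V ⊆ W) :
    visitSet T x V ⊆ visitSet T x W :=
  fun _ hn => h hn

theorem visitSet_prodMap_prod (T₁ : X₁ →L[ℝ] X₁) (T₂ : X₂ →L[ℝ] X₂) (x₁ : X₁) (x₂ : X₂)
    (U : Set X₁) (V : Set X₂) :
    visitSet (T₁.prodMap T₂) (x₁, x₂) (U ×ˢ V) = visitSet T₁ x₁ U ∩ visitSet T₂ x₂ V := by
  ext n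
  simp [visitSet]

end VisitSet

section Hypercyclic

variable {F : Set (Set ℕ)} {X : Type*} [TopologicalSpace X] [AddCommGroup X] [Module ℝ X]

theorem FHypercyclic.of_isTopologicalBasis (hF : IsFurstenbergFamily F) {T : X →L[ℝ] X}
    {B : Set (Set X)} (hB : TopologicalSpace.IsTopologicalBasis B) (x : X)
    (hx : ∀ V ∈ B, V.Nonempty → visitSet T x V ∈ F) : FHypercyclic F T := by
  refine ⟨x, fun W hW ⟨y, hy⟩ => ?_⟩
  obtain ⟨V, hVB, hyV, hVW⟩ := hB.exists_subset_of_mem_open hy hW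
  exact hF.mono (hx V hVB ⟨y, hyV⟩) (visitSet_mono T x hVW)

/-- The definition only quantifies over index types in `Type`; this lifts it to countable
index types in any universe. -/
theorem HereditarilyFHypercyclic.exists_forall {T : X →L[ℝ] X} (h : HereditarilyFHypercyclic F T)
    {ι : Type*} [Countable ι] (V : ι → Set X) (A : ι → Set ℕ) (hV : ∀ i, IsOpen (V i))
    (hVne : ∀ i, (V i).Nonempty) (hA : ∀ i, A i ∈ F) :
    ∃ x : X, ∀ i, visitSet T x (V i) ∩ A i ∈ F := by
  let e := equivShrink.{0} ι
  have : Countable (Shrink.{0} ι) := Countable.of_equiv ι e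
  obtain ⟨x, hx⟩ := h (Shrink.{0} ι) (V ∘ e.symm) (A ∘ e.symm) (fun i => hV _)
    (fun i => hVne _) (fun i => hA _)
  exact ⟨x, fun i => by simpa using hx (e i)⟩

end Hypercyclic

theorem Set.Nonempty.exists_prod_subset_of_isOpen {α β : Type*} [TopologicalSpace α]
    [TopologicalSpace β] {W : Set (α × β)} (hW : IsOpen W) (hne : W.Nonempty) :
    ∃ U : Set α, ∃ V : Set β, IsOpen U ∧ IsOpen V ∧ U.Nonempty ∧ V.Nonempty ∧ U ×ˢ V ⊆ W := by
  obtain ⟨⟨a, b⟩, hab⟩ := hne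
  obtain ⟨U, V, hU, hV, haU, hbV, hUV⟩ := isOpen_prod_iff.1 hW a b hab
  exact ⟨U, V, hU, hV, ⟨a, haU⟩, ⟨b, hbV⟩, hUV⟩

section DirectSum

variable {F : Set (Set ℕ)} {X₁ X₂ : Type*}
  [TopologicalSpace X₁] [AddCommGroup X₁] [Module ℝ X₁]
  [TopologicalSpace X₂] [AddCommGroup X₂] [Module ℝ X₂]
  {T₁ : X₁ →L[ℝ] X₁} {T₂ : X₂ →L[ℝ] X₂}

theorem FHypercyclic.prodMap [SecondCountableTopology X₁] [SecondCountableTopology X₂]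
    (hF : IsFurstenbergFamily F) (h₁ : FHypercyclic F T₁) (h₂ : HereditarilyFHypercyclic F T₂) :
    FHypercyclic F (T₁.prodMap T₂) := by
  obtain ⟨x₁, hx₁⟩ := h₁
  obtain ⟨B₁, hB₁c, hB₁e, hB₁⟩ := TopologicalSpace.exists_countable_basis X₁
  obtain ⟨B₂, hB₂c, hB₂e, hB₂⟩ := TopologicalSpace.exists_countable_basis X₂
  have := hB₁c.to_subtype
  have := hB₂c.to_subtype
  have hB₁ne (U : B₁) : (U : Set X₁).Nonempty :=
    nonempty_iff_ne_empty.2 (ne_of_mem_of_not_mem U.2 hB₁e)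
  have hB₂ne (V : B₂) : (V : Set X₂).Nonempty :=
    nonempty_iff_ne_empty.2 (ne_of_mem_of_not_mem V.2 hB₂e)
  obtain ⟨x₂, hx₂⟩ := h₂.exists_forall (ι := B₁ × B₂) (fun p => p.2) (fun p => visitSet T₁ x₁ p.1)
    (fun p => hB₂.isOpen p.2.2) (fun p => hB₂ne p.2) (fun p => hx₁ _ (hB₁.isOpen p.1.2) (hB₁ne p.1))
  refine FHypercyclic.of_isTopologicalBasis hF (hB₁.prod hB₂) (x₁, x₂) ?_
  rintro _ ⟨U, hU, V, hV, rfl⟩ -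
  rw [visitSet_prodMap_prod, inter_comm]
  exact hx₂ (⟨U, hU⟩, ⟨V, hV⟩)

theorem HereditarilyFHypercyclic.prodMap (hF : IsFurstenbergFamily F)
    (h₁ : HereditarilyFHypercyclic F T₁) (h₂ : HereditarilyFHypercyclic F T₂) :
    HereditarilyFHypercyclic F (T₁.prodMap T₂) := by
  intro I _ W A hW hWne hA
  choose U V hU hV hUne hVne hUV using fun i => (hWne i).exists_prod_subset_of_isOpen (hW i)
  obtain ⟨x₁, hx₁⟩ := h₁ I U A hU hUne hA
  obtain ⟨x₂, hx₂⟩ := h₂ I V (fun i => visitSet T₁ x₁ (U i) ∩ A i) hV hVne hx₁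
  refine ⟨(x₁, x₂), fun i => hF.mono (hx₂ i) ?_⟩
  rintro n ⟨hn₂, hn₁, hnA⟩
  refine ⟨visitSet_mono _ _ (hUV i) ?_, hnA⟩
  rw [visitSet_prodMap_prod]
  exact ⟨hn₁, hn₂⟩

end DirectSum

theorem direct_sum_FHypercyclic_general
    {X₁ X₂ : Type*}
    [TopologicalSpace X₁] [AddCommGroup X₁] [Module ℝ X₁]
    [PolishSpace X₁]
    [TopologicalSpace X₂] [AddCommGroup X₂] [Module ℝ X₂]
    [PolishSpace X₂]
    (F : Set (Set ℕ)) (hF : IsFurstenbergFamily F)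
    (T₁ : X₁ →L[ℝ] X₁) (T₂ : X₂ →L[ℝ] X₂) :
    (FHypercyclic F T₁ → HereditarilyFHypercyclic F T₂ →
      FHypercyclic F (T₁.prodMap T₂)) ∧
    (HereditarilyFHypercyclic F T₁ → HereditarilyFHypercyclic F T₂ →
      HereditarilyFHypercyclic F (T₁.prodMap T₂)) :=
  ⟨FHypercyclic.prodMap hF, HereditarilyFHypercyclic.prodMap hF⟩

/-- If `T₁` is `F`-hypercyclic and `T₂` is hereditarily `F`-hypercyclic then `T₁ ⊕ T₂` is
`F`-hypercyclic; if both are hereditarily `F`-hypercyclic then so is `T₁ ⊕ T₂`. -/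
theorem direct_sum_FHypercyclic
    {X₁ X₂ : Type*}
    [TopologicalSpace X₁] [AddCommGroup X₁] [Module ℝ X₁]
    [IsTopologicalAddGroup X₁] [ContinuousSMul ℝ X₁] [PolishSpace X₁]
    [TopologicalSpace X₂] [AddCommGroup X₂] [Module ℝ X₂]
    [IsTopologicalAddGroup X₂] [ContinuousSMul ℝ X₂] [PolishSpace X₂]
    (F : Set (Set ℕ)) (hF : IsFurstenbergFamily F)
    (T₁ : X₁ →L[ℝ] X₁) (T₂ : X₂ →L[ℝ] X₂) :
    (FHypercyclic F T₁ → HereditarilyFHypercyclic F T₂ →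
      FHypercyclic F (T₁.prodMap T₂)) ∧
    (HereditarilyFHypercyclic F T₁ → HereditarilyFHypercyclic F T₂ →
      HereditarilyFHypercyclic F (T₁.prodMap T₂)) :=
  direct_sum_FHypercyclic_general F hF T₁ T₂
end

section
/- Let F be a Furstenberg family and let T be a hereditarily F-hypercyclic continuous linear operator on a Polish topological vector space X. Then T is densely hereditarily F-hypercyclic: given a countable family (A_i)_{i∈I} of sets in F and a family (V_i)_{i∈I} of non-empty open subsets of X, the set of vectors x ∈ X such that N_T(x,V_i) ∩ A_i ∈ F for all i ∈ I is dense in X. -/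
open Filter Topology Set
open scoped Classical

/-!
Applying hereditary `F`-hypercyclicity to a countable basis gives a vector with dense orbit; as
`X` has no isolated points, every power `Tⁿ` then has dense range. Hence the sets `(Tⁿ)⁻¹(Vᵢ)`
are non-empty and open, and a single `y` can be found with `N_T(y, (Tⁿ)⁻¹(Vᵢ)) ∩ Aᵢ ∈ F` for all
`i, n` and with `T^N y ∈ U` for some `N`. Since `N_T(T^N y, Vᵢ) = N_T(y, (T^N)⁻¹(Vᵢ))`, the
vector `T^N y ∈ U` is as required.
-/

theorem IsFurstenbergFamily.univ_mem {F : Set (Set ℕ)} (hF : IsFurstenbergFamily F)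
    {A : Set ℕ} (hA : A ∈ F) : univ ∈ F :=
  hF.2 A hA univ (subset_univ A)

theorem Function.denseRange_iterate_of_dense_orbit {X : Type*} [TopologicalSpace X] [T1Space X]
    [∀ x : X, NeBot (𝓝[≠] x)] {f : X → X} {x : X} (h : Dense (range fun m => f^[m] x))
    (n : ℕ) : DenseRange f^[n] := by
  have htail : range (fun m => f^[m] x) \ ((fun k => f^[k] x) '' Iio n) ⊆ range f^[n] := by
    rintro _ ⟨⟨m, rfl⟩, hm⟩
    have hnm : n ≤ m := not_lt.1 fun hmn => hm ⟨m, hmn, rfl⟩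
    exact ⟨f^[m - n] x, by rw [← iterate_add_apply, Nat.add_sub_cancel' hnm]⟩
  exact (h.sdiff_finite ((finite_Iio n).image _)).mono htail

section Hypercyclic

variable {X : Type*} [TopologicalSpace X] [AddCommGroup X] [Module ℝ X]

theorem visitSet_pow_apply (T : X →L[ℝ] X) (N : ℕ) (y : X) (V : Set X) :
    visitSet T ((T ^ N) y) V = visitSet T y ((T ^ N) ⁻¹' V) := by
  ext m
  simp only [visitSet, mem_ofPred_eq, mem_preimage, ← mul_apply_eq_comp, ← pow_add,
    add_comm]

variable {F : Set (Set ℕ)} {T : X →L[ℝ] X}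

theorem HereditarilyFHypercyclic.exists_dense_orbit [SecondCountableTopology X]
    (hF : IsFurstenbergFamily F) (huniv : univ ∈ F) (hT : HereditarilyFHypercyclic F T) :
    ∃ x, Dense (range fun n => (T ^ n) x) := by
  obtain ⟨b, hbc, hbne, hb⟩ := TopologicalSpace.exists_countable_basis X
  have hb_nonempty : b.Nonempty := by
    obtain ⟨s, hs, -⟩ := hb.exists_subset_of_mem_open (mem_univ (0 : X)) isOpen_univ
    exact ⟨s, hs⟩
  obtain ⟨B, rfl⟩ := hbc.exists_eq_range hb_nonempty
  obtain ⟨x, hx⟩ := hT ℕ B (fun _ => univ) (fun n => hb.isOpen ⟨n, rfl⟩)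
    (fun n => nonempty_iff_ne_empty.2 fun h => hbne (h ▸ ⟨n, rfl⟩)) (fun _ => huniv)
  refine ⟨x, hb.dense_iff.2 ?_⟩
  rintro _ ⟨n, rfl⟩ -
  obtain ⟨m, hm, -⟩ := hF.1 _ (hx n)
  exact ⟨_, hm, m, rfl⟩

theorem HereditarilyFHypercyclic.denseRange_pow [T1Space X] [SecondCountableTopology X]
    [ContinuousAdd X] [ContinuousSMul ℝ X] (hF : IsFurstenbergFamily F) (huniv : univ ∈ F)
    (hT : HereditarilyFHypercyclic F T) (n : ℕ) : DenseRange (T ^ n) := by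
  rcases subsingleton_or_nontrivial X with hX | hX
  · exact Function.Surjective.denseRange fun y => ⟨y, Subsingleton.elim _ _⟩
  obtain ⟨x, hx⟩ := hT.exists_dense_orbit hF huniv
  simp only [FunLike.coe_pow_eq_iterate] at hx ⊢
  exact Function.denseRange_iterate_of_dense_orbit hx n

end Hypercyclic

/-- A hereditarily `F`-hypercyclic operator on a Polish topological vector space is densely
hereditarily `F`-hypercyclic: for any countable family `(Aᵢ) ⊆ F` and any family `(Vᵢ)` of
non-empty open sets, the set of `x` with `N_T(x,Vᵢ) ∩ Aᵢ ∈ F` for all `i` is dense. -/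
theorem hereditarilyFHypercyclic_dense
    {X : Type*} [TopologicalSpace X] [AddCommGroup X] [Module ℝ X]
    [IsTopologicalAddGroup X] [ContinuousSMul ℝ X] [PolishSpace X]
    (F : Set (Set ℕ)) (hF : IsFurstenbergFamily F)
    (T : X →L[ℝ] X) (hT : HereditarilyFHypercyclic F T)
    (I : Type) [Countable I] (A : I → Set ℕ) (V : I → Set X)
    (hA : ∀ i, A i ∈ F) (hVo : ∀ i, IsOpen (V i)) (hVne : ∀ i, (V i).Nonempty) :
    Dense {x : X | ∀ i, visitSet T x (V i) ∩ A i ∈ F} := by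
  rcases isEmpty_or_nonempty I with hI | ⟨⟨i₀⟩⟩
  · simp only [IsEmpty.forall_iff, ofPred_true, dense_univ]
  have huniv : univ ∈ F := hF.univ_mem (hA i₀)
  refine dense_iff_inter_open.2 fun U hUo hUne => ?_
  obtain ⟨y, hy⟩ := hT ((I × ℕ) ⊕ Unit)
    (Sum.elim (fun p => (T ^ p.2) ⁻¹' V p.1) fun _ => U) (Sum.elim (fun p => A p.1) fun _ => univ)
    (by rintro (⟨i, n⟩ | -)
        exacts [(hVo i).preimage (T ^ n).continuous, hUo])
    (by rintro (⟨i, n⟩ | -)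
        exacts [(hT.denseRange_pow hF huniv n).exists_mem_open (hVo i) (hVne i), hUne])
    (by rintro (⟨i, n⟩ | -)
        exacts [hA i, huniv])
  obtain ⟨N, hN, -⟩ := hF.1 _ (hy (.inr ()))
  exact ⟨(T ^ N) y, hN, fun i => visitSet_pow_apply T N y (V i) ▸ hy (.inl (i, N))⟩
end

section
/- Let (X, B, μ, T) be a measure-preserving dynamical system on a probability space, and assume that T is weakly mixing with respect to μ. Let (n_k)_{k≥1} and (k_i)_{i≥0} be increasing sequences of positive integers such that n_{k_i} = O(k_i) as i → ∞. Then for every measurable set V ⊆ X, the averages (1/k_i) Σ_{k=1}^{k_i} 1_V(T^{n_k} x) converge to μ(V) in L²(μ) as i → ∞. -/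
open Filter Topology Set MeasureTheory
open scoped Classical

/-- `T` is weakly mixing with respect to `μ`: for all measurable sets `A`, `B`,
`(1/N) Σ_{n<N} |μ(A ∩ T^{-n}B) − μ(A)μ(B)| → 0`. -/
def WeaklyMixingWrt {X : Type*} [MeasurableSpace X] (T : X → X) (μ : Measure X) : Prop :=
  ∀ A B : Set X, MeasurableSet A → MeasurableSet B →
    Tendsto (fun N : ℕ =>
      (∑ n ∈ Finset.range N,
        |(μ (A ∩ T^[n] ⁻¹' B)).toReal - (μ A).toReal * (μ B).toReal|) / N)
      atTop (nhds 0)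

/-!
With `c = μ V` and `K = k_i`, the mean square deviation is the variance of the average of the
indicators of `T^{-n_j} V`, namely `K⁻² Σ_{j,l ≤ K} (μ(V ∩ T^{-|n_j - n_l|} V) - c²)`.
For fixed `j` the map `l ↦ |n_j - n_l|` is at most two-to-one into `[0, n_K]`, so this is at
most `2 K⁻¹ Σ_{m ≤ n_K} |μ(V ∩ T^{-m} V) - c²|`. Since `n_K + 1 ≤ (C + 1) K`, this is a
constant times the weak-mixing Cesàro average up to `n_K`, which tends to `0`.
-/

open ProbabilityTheory

theorem Finset.sum_comp_le_sum_of_injOn {ι κ M : Type*} [AddCommMonoid M] [PartialOrder M]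
    [IsOrderedAddMonoid M] {s : Finset ι} {t : Finset κ} {f : ι → κ} {g : κ → M}
    (hf : InjOn f s) (hst : MapsTo f s t) (hg : ∀ y ∈ t, 0 ≤ g y) :
    ∑ i ∈ s, g (f i) ≤ ∑ y ∈ t, g y := by
  rw [← Finset.sum_image hf]
  exact Finset.sum_le_sum_of_subset_of_nonneg (Finset.image_subset_iff.2 hst)
    fun y hy _ => hg y hy

theorem Nat.sum_dist_le_two_mul_sum_range {ι : Type*} {g : ℕ → ℝ} (hg : ∀ m, 0 ≤ g m)
    {s : Finset ι} {f : ι → ℕ} (hf : InjOn f s) {x N : ℕ} (hx : x ≤ N)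
    (hfN : ∀ i ∈ s, f i ≤ N) :
    ∑ i ∈ s, g (Nat.dist x (f i)) ≤ 2 * ∑ m ∈ Finset.range (N + 1), g m := by
  have hmaps : ∀ i ∈ s, Nat.dist x (f i) ∈ Finset.range (N + 1) := fun i hi => by
    have := hfN i hi
    rw [Finset.mem_range]; unfold Nat.dist; omega
  -- on each side of `x`, `i ↦ Nat.dist x (f i)` is injective
  rw [← Finset.sum_filter_add_sum_filter_not s (fun i => f i ≤ x), two_mul]
  gcongr <;>
  refine Finset.sum_comp_le_sum_of_injOn (fun i hi j hj hij => ?_)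
    (fun i hi => hmaps i (Finset.mem_filter.1 hi).1) fun m _ => hg m <;>
  rw [Finset.mem_coe, Finset.mem_filter] at hi hj <;>
  refine hf hi.1 hj.1 ?_ <;>
  unfold Nat.dist at hij <;> omega

section Indicator

variable {X : Type*} [MeasurableSpace X] {μ : Measure X}

theorem memLp_indicator_one [IsFiniteMeasure μ] {A : Set X} (hA : MeasurableSet A)
    (p : ENNReal) : MemLp (A.indicator (1 : X → ℝ)) p μ :=
  memLp_indicator_const p hA 1 (Or.inr (measure_ne_top μ A))

variable [IsProbabilityMeasure μ]

theorem covariance_indicator_one {A B : Set X} (hA : MeasurableSet A) (hB : MeasurableSet B) :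
    cov[A.indicator 1, B.indicator 1; μ] = μ.real (A ∩ B) - μ.real A * μ.real B := by
  rw [covariance_eq_sub (memLp_indicator_one hA 2) (memLp_indicator_one hB 2),
    ← inter_indicator_one, integral_indicator_one (hA.inter hB), integral_indicator_one hA,
    integral_indicator_one hB]

theorem integral_sq_average_indicator_sub {ι : Type*} {s : Finset ι} (hs : s.Nonempty)
    {A : ι → Set X} (hA : ∀ i ∈ s, MeasurableSet (A i)) {c : ℝ}
    (hc : ∀ i ∈ s, μ.real (A i) = c) :
    ∫ x, ((∑ i ∈ s, (A i).indicator 1 x) / s.card - c) ^ 2 ∂μ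
      = (∑ i ∈ s, ∑ j ∈ s, (μ.real (A i ∩ A j) - c * c)) / s.card ^ 2 := by
  have hL2 : ∀ i ∈ s, MemLp ((A i).indicator (1 : X → ℝ)) 2 μ :=
    fun i hi => memLp_indicator_one (hA i hi) 2
  have hsum : MemLp (fun x => ∑ i ∈ s, (A i).indicator (1 : X → ℝ) x) 2 μ :=
    memLp_finsetSum s hL2
  have hcard : (s.card : ℝ) ≠ 0 := by exact_mod_cast hs.card_pos.ne'
  have hmean : ∫ x, (∑ i ∈ s, (A i).indicator (1 : X → ℝ) x) / s.card ∂μ = c := by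
    rw [integral_div, integral_finsetSum _ fun i hi => (hL2 i hi).integrable one_le_two,
      Finset.sum_congr rfl fun i hi => by rw [integral_indicator_one (hA i hi), hc i hi],
      Finset.sum_const, nsmul_eq_mul, mul_div_cancel_left₀ _ hcard]
  conv_lhs => rw [← hmean, ← variance_eq_integral (hsum.aemeasurable.div_const _)]
  simp_rw [div_eq_mul_inv]
  rw [variance_mul_const, variance_fun_sum' hL2, Finset.sum_congr rfl fun i hi => Finset.sum_congr rfl fun j hj => by
    rw [covariance_indicator_one (hA i hi) (hA j hj), hc i hi, hc j hj]]
  field_simp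

end Indicator

section Iterate

variable {X : Type*} [MeasurableSpace X]

noncomputable def autocovariance (μ : Measure X) (T : X → X) (V : Set X) (m : ℕ) : ℝ :=
  μ.real (V ∩ T^[m] ⁻¹' V) - μ.real V * μ.real V

variable {μ : Measure X} {T : X → X}

theorem MeasureTheory.MeasurePreserving.measure_preimage_iterate_inter_preimage_iterate
    (hT : MeasurePreserving T μ μ) {A B : Set X} (hA : MeasurableSet A) (hB : MeasurableSet B)
    {a b : ℕ} (hab : a ≤ b) :
    μ (T^[a] ⁻¹' A ∩ T^[b] ⁻¹' B) = μ (A ∩ T^[b - a] ⁻¹' B) := by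
  rw [← Nat.sub_add_cancel hab, Function.iterate_add, Nat.add_sub_cancel, preimage_comp,
    ← preimage_inter, (hT.iterate a).measure_preimage
      (hA.inter ((hT.iterate _).measurable hB)).nullMeasurableSet]

theorem MeasureTheory.MeasurePreserving.measureReal_preimage_iterate_inter_dist
    (hT : MeasurePreserving T μ μ) {V : Set X} (hV : MeasurableSet V) (a b : ℕ) :
    μ.real (T^[a] ⁻¹' V ∩ T^[b] ⁻¹' V) = μ.real (V ∩ T^[Nat.dist a b] ⁻¹' V) := by
  rcases le_total a b with hab | hba
  · rw [Nat.dist_eq_sub_of_le hab, measureReal_def,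
      hT.measure_preimage_iterate_inter_preimage_iterate hV hV hab, measureReal_def]
  · rw [inter_comm, Nat.dist_comm, Nat.dist_eq_sub_of_le hba, measureReal_def,
      hT.measure_preimage_iterate_inter_preimage_iterate hV hV hba, measureReal_def]

theorem integral_sq_average_indicator_iterate_sub_le [IsProbabilityMeasure μ]
    (hT : MeasurePreserving T μ μ) {V : Set X} (hV : MeasurableSet V) {n : ℕ → ℕ}
    (hn : StrictMono n) {K : ℕ} (hK : 0 < K) :
    ∫ x, ((∑ j ∈ Finset.Icc 1 K, V.indicator (fun _ => (1 : ℝ)) (T^[n j] x)) / K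
        - μ.real V) ^ 2 ∂μ
      ≤ 2 * (∑ m ∈ Finset.range (n K + 1), |autocovariance μ T V m|)
        / K := by
  set B := ∑ m ∈ Finset.range (n K + 1), |autocovariance μ T V m|
  have hcard : ((Finset.Icc 1 K).card : ℝ) = K := by simp
  have hrow : ∀ j ∈ Finset.Icc 1 K, ∑ l ∈ Finset.Icc 1 K,
      |autocovariance μ T V (Nat.dist (n j) (n l))| ≤ 2 * B :=
    fun j hj => Nat.sum_dist_le_two_mul_sum_range
      (g := fun m => |autocovariance μ T V m|)
      (fun _ => abs_nonneg _) hn.injective.injOn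
      (hn.monotone (Finset.mem_Icc.1 hj).2) fun l hl => hn.monotone (Finset.mem_Icc.1 hl).2
  have hind : ∀ j x,
      V.indicator (fun _ => (1 : ℝ)) (T^[n j] x) = (T^[n j] ⁻¹' V).indicator 1 x :=
    fun j x => (indicator_comp_right _).symm
  simp_rw [hind, ← hcard]
  rw [integral_sq_average_indicator_sub (Finset.nonempty_Icc.2 hK)
    (fun j _ => (hT.iterate (n j)).measurable hV)
    (fun j _ => (hT.iterate (n j)).measureReal_preimage hV.nullMeasurableSet)]
  simp_rw [hT.measureReal_preimage_iterate_inter_dist hV, hcard]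
  calc _ = (∑ j ∈ Finset.Icc 1 K, ∑ l ∈ Finset.Icc 1 K,
        autocovariance μ T V (Nat.dist (n j) (n l))) / K ^ 2 := rfl
    _ ≤ (∑ j ∈ Finset.Icc 1 K, ∑ l ∈ Finset.Icc 1 K,
        |autocovariance μ T V (Nat.dist (n j) (n l))|) / K ^ 2 := by
        gcongr
        exact le_abs_self _
    _ ≤ K * (2 * B) / K ^ 2 := by
        gcongr
        simpa [hcard] using Finset.sum_le_card_nsmul _ _ _ hrow
    _ = 2 * B / K := by field_simp

end Iterate

theorem blumHanson_along_subsequence_general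
    {X : Type*} [MeasurableSpace X] (μ : Measure X) [IsProbabilityMeasure μ]
    (T : X → X) (hT : MeasurePreserving T μ μ) (hwm : WeaklyMixingWrt T μ)
    (n k : ℕ → ℕ) (hn : StrictMono n) (hk : StrictMono k)
    (hO : ∃ C : ℝ, ∀ i, (n (k i) : ℝ) ≤ C * k i)
    (V : Set X) (hV : MeasurableSet V) :
    Tendsto (fun i : ℕ =>
      ∫ x, ((∑ j ∈ Finset.Icc 1 (k i),
          Set.indicator V (fun _ => (1 : ℝ)) (T^[n j] x)) / (k i)
        - (μ V).toReal) ^ 2 ∂μ) atTop (nhds 0) := by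
  obtain ⟨C, hC⟩ := hO
  set B : ℕ → ℝ := fun N =>
    ∑ m ∈ Finset.range N, |autocovariance μ T V m|
  have hmix : Tendsto (fun i => B (n (k i) + 1) / (n (k i) + 1 : ℕ)) atTop (𝓝 0) :=
    (hwm V V hV hV).comp
      ((tendsto_add_atTop_nat 1).comp (hn.tendsto_atTop.comp hk.tendsto_atTop))
  refine squeeze_zero' (Eventually.of_forall fun i => integral_nonneg fun x => sq_nonneg _) ?_
    (by simpa only [mul_zero] using hmix.const_mul (2 * (C + 1)))
  filter_upwards [eventually_ge_atTop 1] with i hi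
  have hki : 1 ≤ k i := hi.trans (hk.id_le i)
  set N := n (k i) + 1
  have hNk : (N : ℝ) / k i ≤ C + 1 := by
    have : (1 : ℝ) ≤ k i := Nat.one_le_cast.2 hki
    rw [div_le_iff₀ (by linarith)]
    push_cast [N]
    linarith [hC i]
  have hN : (0 : ℝ) < N := Nat.cast_pos.2 (Nat.succ_pos _)
  have hB : 0 ≤ B N := Finset.sum_nonneg fun m _ => abs_nonneg _
  calc _ ≤ 2 * B N / k i := integral_sq_average_indicator_iterate_sub_le hT hV hn hki
    _ = 2 * (B N / N) * (N / k i) := by field_simp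
    _ ≤ 2 * (B N / N) * (C + 1) := by gcongr
    _ = 2 * (C + 1) * (B N / N) := by ring

/-- (A Blum–Hanson type lemma.) If `T` is a weakly mixing measure-preserving transformation
of a probability space, `(n_k)` and `(k_i)` are increasing sequences of positive integers
with `n_{k_i} = O(k_i)`, then for any measurable `V`, the averages
`(1/k_i) Σ_{k=1}^{k_i} 1_V(T^{n_k} x)` converge to `μ(V)` in `L²(μ)`. -/
theorem blumHanson_along_subsequence
    {X : Type*} [MeasurableSpace X] (μ : Measure X) [IsProbabilityMeasure μ]
    (T : X → X) (hT : MeasurePreserving T μ μ) (hwm : WeaklyMixingWrt T μ)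
    (n k : ℕ → ℕ) (hn : StrictMono n) (hk : StrictMono k)
    (hnpos : ∀ j, 0 < n j) (hkpos : ∀ i, 0 < k i)
    (hO : ∃ C : ℝ, ∀ i, (n (k i) : ℝ) ≤ C * k i)
    (V : Set X) (hV : MeasurableSet V) :
    Tendsto (fun i : ℕ =>
      ∫ x, ((∑ j ∈ Finset.Icc 1 (k i),
          Set.indicator V (fun _ => (1 : ℝ)) (T^[n j] x)) / (k i)
        - (μ V).toReal) ^ 2 ∂μ) atTop (nhds 0) :=
  blumHanson_along_subsequence_general μ T hT hwm n k hn hk hO V hV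
end

section
/- Let X be a Banach space admitting a Schauder basis (e_k)_{k≥0}, and let T be a bounded operator on X. For K ≥ 1, let π_K denote the canonical basis projection onto span(e_k : 0 ≤ k ≤ K−1). Assume there exist increasing sequences of positive integers (K_n)_{n≥1} and (J_n)_{n≥1} such that for every n: (a) T^{J_n} π_{K_n} = π_{K_n}, and (b) ‖π_{K_n} T^j (I − π_{K_n}) x‖ ≤ ‖(I − π_{K_n}) x‖ for all x ∈ X and all 0 ≤ j ≤ (n+1)^{2^{J_n}} J_n. Then there exists a set A ⊆ ℕ with positive lower density such that T is not frequently hypercyclic along A (and thus T is not hereditarily frequently hypercyclic). -/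
open Filter Topology Set
open scoped Classical

/-!
Because the coordinates of a Schauder basis are unique, the closed graph theorem bounds the basis
projections uniformly. By (a) and (b), up to time `L_n = (n+1)^{2^{J_n}} J_n` the vectors
`π_{K_n} T^j x` then stay within `‖x - π_{K_n} x‖` of a `J_n`-periodic sequence. For large `n`, the
times `j ≤ L_n` at which `T^j x` is near `0` and those at which it is near `e_0` therefore have
residues mod `J_n` in complementary sets `F` and `Fᶜ`.

The set `A` contains, for every `n` and every set `G` of `⌈J_n/2⌉` residues mod `J_n`, a segment
`(M, (n+1)M]` below `L_n` on which it keeps only the residues in `G`, and it contains every integer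
outside these segments. Taking `G ⊆ F` or `G ⊆ Fᶜ`, one of the two visit sets misses such a
segment, so its lower density is at most `1/(n+1)`. Since each segment keeps half of every period,
`A` itself has lower density at least `1/4`.
-/

section SchauderBasis

variable {X : Type*} [NormedAddCommGroup X] [NormedSpace ℝ X]

def partialSum (e : ℕ → X) (b : ℕ → ℝ) : ℕ → X := fun K => ∑ k ∈ Finset.range K, b k • e k

def HasCoordinateExpansion (e : ℕ → X) (a : ℕ → X → ℝ) : Prop :=
  ∀ x, Tendsto (partialSum e (a · x)) atTop (𝓝 x)

def HasUniqueCoordinates (e : ℕ → X) (a : ℕ → X → ℝ) : Prop :=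
  ∀ x b, Tendsto (partialSum e b) atTop (𝓝 x) → ∀ k, b k = a k x

variable {e : ℕ → X} {a : ℕ → X → ℝ}

lemma HasUniqueCoordinates.coord_basis (huniq : HasUniqueCoordinates e a) (j k : ℕ) :
    a k (e j) = if k = j then 1 else 0 := by
  refine (huniq (e j) (fun k => if k = j then 1 else 0) ?_ k).symm
  refine tendsto_const_nhds.congr' ?_
  filter_upwards [eventually_gt_atTop j] with K hK
  simp [partialSum, ite_smul, hK]

lemma HasUniqueCoordinates.partialSum_basis (huniq : HasUniqueCoordinates e a) {j K : ℕ}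
    (h : j < K) : partialSum e (a · (e j)) K = e j := by
  simp [partialSum, huniq.coord_basis, ite_smul, h]

lemma HasUniqueCoordinates.basis_ne_zero (huniq : HasUniqueCoordinates e a) (k : ℕ) :
    e k ≠ 0 := by
  intro hk
  have h0 := huniq 0 0 (by unfold partialSum; simp) k
  have h1 := huniq.coord_basis k k
  rw [hk, ← h0] at h1
  simp at h1

lemma isLinearMap_coord (hrepr : HasCoordinateExpansion e a) (huniq : HasUniqueCoordinates e a)
    (k : ℕ) : IsLinearMap ℝ (a k) where
  map_add x y := (huniq (x + y) (fun k => a k x + a k y)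
    (by
      have h := (hrepr x).add (hrepr y)
      unfold partialSum at h ⊢
      simpa [add_smul, Finset.sum_add_distrib] using h) k).symm
  map_smul c x := (huniq (c • x) (fun k => c * a k x)
    (by
      have h := (hrepr x).const_smul c
      unfold partialSum at h ⊢
      simpa [mul_smul, Finset.smul_sum] using h) k).symm

lemma exists_tendsto_of_tendsto_smul {v w : X} (hv : v ≠ 0) {t : ℕ → ℝ}
    (h : Tendsto (fun i => t i • v) atTop (𝓝 w)) : ∃ c, Tendsto t atTop (𝓝 c) := by
  have hemb := isClosedEmbedding_smul_left (𝕜 := ℝ) hv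
  obtain ⟨c, rfl⟩ : w ∈ Set.range (· • v) :=
    hemb.isClosed_range.mem_of_tendsto h (Eventually.of_forall fun i => ⟨t i, rfl⟩)
  exact ⟨c, hemb.tendsto_nhds_iff.2 h⟩

/-- The graph of `x ↦ (partialSum e (a · x) K)_K`, into sequences with the uniform norm, is
closed. -/
lemma partialSum_eq_of_tendstoUniformly (hrepr : HasCoordinateExpansion e a)
    (huniq : HasUniqueCoordinates e a) {u : ℕ → X} {x₀ : X} {y : ℕ → X}
    (hu : Tendsto u atTop (𝓝 x₀))
    (hy : TendstoUniformly (fun i => partialSum e (a · (u i))) y atTop) :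
    y = partialSum e (a · x₀) := by
  have hcoord : ∀ k, ∃ c, Tendsto (fun i => a k (u i)) atTop (𝓝 c) := by
    intro k
    refine exists_tendsto_of_tendsto_smul (w := y (k + 1) - y k) (huniq.basis_ne_zero k) ?_
    refine ((hy.tendsto_at (k + 1)).sub (hy.tendsto_at k)).congr fun i => ?_
    simp [partialSum, Finset.sum_range_succ]
  choose c hc using hcoord
  have hyc : y = partialSum e c := funext fun K =>
    tendsto_nhds_unique (hy.tendsto_at K) (tendsto_finsetSum _ fun k _ => (hc k).smul_const _)
  have hcx : Tendsto (partialSum e c) atTop (𝓝 x₀) :=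
    hyc ▸ hy.tendsto_of_eventually_tendsto (Eventually.of_forall fun i => hrepr (u i)) hu
  rw [hyc]
  exact congrArg _ (funext (huniq x₀ c hcx))

theorem exists_partialSum_clm_norm_le [CompleteSpace X] (hrepr : HasCoordinateExpansion e a)
    (huniq : HasUniqueCoordinates e a) :
    ∃ (P : ℕ → X →L[ℝ] X) (C : ℝ), (∀ K x, P K x = partialSum e (a · x) K) ∧ ∀ K, ‖P K‖ ≤ C := by
  have hbdd : ∀ x, ∃ C, ∀ K, ‖partialSum e (a · x) K‖ ≤ C := fun x =>
    let ⟨C, hC⟩ := (hrepr x).norm.bddAbove_range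
    ⟨C, fun K => hC ⟨K, rfl⟩⟩
  choose C hC using hbdd
  have hlin := isLinearMap_coord hrepr huniq
  let Φ : X →ₗ[ℝ] BoundedContinuousFunction ℕ X :=
    { toFun x := .ofNormedAddCommGroup (partialSum e (a · x)) continuous_of_discreteTopology
        (C x) (hC x)
      map_add' x y := by
        ext K
        simp [partialSum, (hlin _).map_add, add_smul, Finset.sum_add_distrib]
      map_smul' c x := by
        ext K
        simp [partialSum, (hlin _).map_smul, mul_smul, Finset.smul_sum] }
  have hΦ : Continuous Φ := Φ.continuous_of_seq_closed_graph fun u x₀ y hu hy => by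
    rw [BoundedContinuousFunction.tendsto_iff_tendstoUniformly] at hy
    ext K
    exact congrFun (partialSum_eq_of_tendstoUniformly hrepr huniq hu hy) K
  let Φc : X →L[ℝ] BoundedContinuousFunction ℕ X := ⟨Φ, hΦ⟩
  refine ⟨fun K => (BoundedContinuousFunction.evalCLM ℝ K).comp Φc, ‖Φc‖, fun K x => rfl,
    fun K => ContinuousLinearMap.opNorm_le_bound _ (norm_nonneg _) fun x => ?_⟩
  exact (BoundedContinuousFunction.norm_coe_le_norm _ K).trans (Φc.le_opNorm x)

end SchauderBasis

section Visits

variable {X : Type*} [NormedAddCommGroup X] [NormedSpace ℝ X]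

lemma pow_apply_mod {T : X →L[ℝ] X} {J : ℕ} {y : X} (hy : (T ^ J) y = y) (j : ℕ) :
    (T ^ j) y = (T ^ (j % J)) y := by
  have hper : Function.IsPeriodicPt T J y := by
    simpa [Function.IsPeriodicPt, Function.IsFixedPt] using hy
  simpa using (hper.iterate_mod_apply j).symm

/-- Up to time `L`, `P (T^j x)` stays within `‖x - P x‖` of the `J`-periodic sequence
`P (T^j (P x))`, so the residue of `j` mod `J` decides whether `T^j x` may be near `0` or near `v`.
-/
lemma exists_residues_separating_visits (P T : X →L[ℝ] X) {J L : ℕ} (hJ : 0 < J) {x v : X}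
    {r : ℝ} (hper : (T ^ J) (P x) = P x)
    (hb : ∀ j ≤ L, ‖P ((T ^ j) (x - P x))‖ ≤ ‖x - P x‖) (hv : P v = v)
    (hr : ‖P‖ * r + ‖x - P x‖ < ‖v‖ / 2) :
    ∃ F ⊆ Finset.range J, ∀ j ≤ L,
      ((T ^ j) x ∈ Metric.ball 0 r → j % J ∈ F) ∧ ((T ^ j) x ∈ Metric.ball v r → j % J ∉ F) := by
  set g : ℕ → X := fun ρ => P ((T ^ ρ) (P x))
  have hclose : ∀ j ≤ L, ‖P ((T ^ j) x) - g (j % J)‖ ≤ ‖x - P x‖ := fun j hj => by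
    simpa only [g, ← pow_apply_mod hper, ← map_sub] using hb j hj
  have hP : ∀ {z w : X}, ‖z - w‖ < r → ‖P z - P w‖ ≤ ‖P‖ * r := fun h => by
    rw [← map_sub]
    exact (P.le_opNorm _).trans (by gcongr)
  refine ⟨(Finset.range J).filter (‖g ·‖ < ‖v‖ / 2), Finset.filter_subset _ _,
    fun j hj => ⟨fun h0 => ?_, fun h1 hF => ?_⟩⟩
  · rw [mem_ball_zero_iff] at h0
    have := hP (z := (T ^ j) x) (w := 0) (by rwa [sub_zero])
    rw [map_zero, sub_zero] at this
    refine Finset.mem_filter.2 ⟨Finset.mem_range.2 (Nat.mod_lt _ hJ), ?_⟩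
    linarith [norm_le_norm_add_norm_sub' (g (j % J)) (P ((T ^ j) x)),
      norm_sub_rev (g (j % J)) (P ((T ^ j) x)), hclose j hj]
  · rw [mem_ball_iff_norm] at h1
    have := hP h1
    rw [hv] at this
    have hg := (Finset.mem_filter.1 hF).2
    linarith [norm_le_norm_add_norm_sub' v (g (j % J)),
      norm_sub_le_norm_sub_add_norm_sub v (P ((T ^ j) x)) (g (j % J)),
      norm_sub_rev v (P ((T ^ j) x)), hclose j hj]

end Visits

section Density

noncomputable def countUpTo (A : Set ℕ) (N : ℕ) : ℕ := ((Finset.Icc 1 N).filter (· ∈ A)).card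

lemma countUpTo_add (A : Set ℕ) (M k : ℕ) :
    countUpTo A (M + k) = countUpTo A M + ((Finset.Ioc M (M + k)).filter (· ∈ A)).card := by
  have hIcc : ∀ N, Finset.Icc 1 N = Finset.Ioc 0 N := Finset.Icc_add_one_left_eq_Ioc 0
  rw [countUpTo, countUpTo, hIcc, hIcc, ← Finset.card_union_of_disjoint
    (Finset.disjoint_filter_filter (Finset.Ioc_disjoint_Ioc_of_le le_rfl)), ← Finset.filter_union,
    Finset.Ioc_union_Ioc_eq_Ioc (Nat.zero_le M) (Nat.le_add_right M k)]

lemma countUpTo_mono (A : Set ℕ) : Monotone (countUpTo A) := fun _ _ h =>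
  Finset.card_le_card (Finset.filter_subset_filter _ (Finset.Icc_subset_Icc le_rfl h))

lemma countUpTo_le (A : Set ℕ) (N : ℕ) : countUpTo A N ≤ N :=
  (Finset.card_filter_le _ _).trans (by simp)

lemma card_filter_mod_eq_Ioc {p : ℕ} (hp : 0 < p) (c t : ℕ) {ρ : ℕ} (hρ : ρ < p) :
    ((Finset.Ioc c (c + t * p)).filter (· % p = ρ)).card = t := by
  have h := Nat.Ioc_filter_modEq_card c (c + t * p) hp ρ
  have hq : (((c + t * p : ℕ) : ℚ) - ρ) / p = (c - ρ) / p + t := by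
    push_cast
    field_simp
    ring
  rw [hq, Int.floor_add_natCast, add_sub_cancel_left, max_eq_left (by positivity)] at h
  rw [← Nat.cast_inj (R := ℤ), ← h]
  congr 2
  exact Finset.filter_congr fun x _ => by rw [Nat.ModEq, Nat.mod_eq_of_lt hρ]

lemma card_filter_mod_mem_Ioc {p : ℕ} (hp : 0 < p) {E : Finset ℕ} (hE : E ⊆ Finset.range p)
    (c t : ℕ) : ((Finset.Ioc c (c + t * p)).filter (· % p ∈ E)).card = t * E.card := by
  rw [Finset.card_eq_sum_card_fiberwise (s := (Finset.Ioc c (c + t * p)).filter (· % p ∈ E))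
    (f := (· % p)) (t := E) fun m hm => (Finset.mem_filter.1 hm).2]
  rw [Finset.sum_congr rfl fun ρ hρ => ?_, Finset.sum_const, smul_eq_mul, mul_comm]
  rw [Finset.filter_filter]
  convert card_filter_mod_eq_Ioc hp c t (Finset.mem_range.1 (hE hρ)) using 2
  exact Finset.filter_congr fun m _ => ⟨And.right, fun h => ⟨by rwa [h], h⟩⟩

lemma countUpTo_residue_block {A : Set ℕ} {M p q : ℕ} {E : Finset ℕ} (hp : 0 < p)
    (hpM : p ≤ M + 1) (hE : E ⊆ Finset.range p) (hEp : p ≤ 2 * E.card)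
    (hM : M ≤ 2 * countUpTo A M) (hA : ∀ m, M < m → m ≤ M + q * p → m % p ∈ E → m ∈ A) :
    M + q * p ≤ 2 * countUpTo A (M + q * p) ∧
      ∀ N, M ≤ N → N ≤ M + q * p → N ≤ 4 * countUpTo A N := by
  have hcount : ∀ t ≤ q, countUpTo A M + t * E.card ≤ countUpTo A (M + t * p) := fun t ht => by
    rw [countUpTo_add, ← card_filter_mod_mem_Ioc hp hE]
    gcongr with m hm
    · exact hA m (Finset.mem_Ioc.1 hm).1 ((Finset.mem_Ioc.1 hm).2.trans (by gcongr))
  have hhalf : ∀ t, t * p ≤ 2 * (t * E.card) := fun t => by nlinarith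
  refine ⟨by linarith [hcount q le_rfl, hhalf q], fun N hMN hNq => ?_⟩
  obtain ⟨t, r, hr, rfl⟩ : ∃ t r, r < p ∧ N = M + t * p + r :=
    ⟨(N - M) / p, (N - M) % p, Nat.mod_lt _ hp, by have := Nat.div_add_mod' (N - M) p; omega⟩
  have htq : t ≤ q := by
    by_contra! h
    nlinarith
  have hrM : r ≤ M := by omega
  have := countUpTo_mono A (Nat.le_add_right (M + t * p) r)
  linarith [hcount t htq, hhalf t, Nat.zero_le (t * p)]

lemma countUpTo_full_block {A : Set ℕ} {M M' : ℕ} (hMM' : M ≤ M')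
    (hM : M ≤ 2 * countUpTo A M) (hA : ∀ m, M < m → m ≤ M' → m ∈ A) :
    M' ≤ 2 * countUpTo A M' ∧ ∀ N, M ≤ N → N ≤ M' → N ≤ 4 * countUpTo A N := by
  obtain ⟨q, rfl⟩ := Nat.exists_eq_add_of_le hMM'
  simpa using countUpTo_residue_block (q := q) (E := {0}) one_pos (by omega) (by simp) (by simp) hM
    fun m h1 h2 _ => hA m h1 (by simpa using h2)

lemma lowerDensity_eq_liminf (A : Set ℕ) :
    lowerDensity A = atTop.liminf fun N => (countUpTo A N : ℝ) / N := rfl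

lemma inv_le_lowerDensity {A : Set ℕ} {c : ℕ} (hc : 0 < c) (h : ∀ N, N ≤ c * countUpTo A N) :
    (c : ℝ)⁻¹ ≤ lowerDensity A := by
  rw [lowerDensity_eq_liminf]
  refine le_liminf_of_le (isBoundedUnder_of ⟨1, fun N => div_le_one_of_le₀
    (by exact_mod_cast countUpTo_le A N) N.cast_nonneg⟩).isCoboundedUnder_ge ?_
  filter_upwards [eventually_gt_atTop 0] with N hN
  rw [le_div_iff₀ (by positivity), inv_mul_le_iff₀ (by positivity)]
  exact_mod_cast h N

lemma eventually_exists_mem_Ioc_mul {S : Set ℕ} (hS : 0 < lowerDensity S) :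
    ∀ᶠ n in atTop, ∀ M, 0 < M → ∃ m ∈ S, M < m ∧ m ≤ n * M := by
  have hδ : 0 < lowerDensity S / 2 := by positivity
  obtain ⟨N₀, hN₀⟩ := eventually_atTop.1 <| eventually_lt_of_lt_liminf
    (b := lowerDensity S / 2) (by rw [← lowerDensity_eq_liminf S]; linarith)
    (isBoundedUnder_of ⟨0, fun N => by positivity⟩)
  filter_upwards [eventually_ge_atTop (max N₀ 1),
    tendsto_natCast_atTop_atTop.eventually_gt_atTop (lowerDensity S / 2)⁻¹] with n hn hnδ M hM
  by_contra! hgap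
  obtain ⟨k, hk⟩ := Nat.exists_eq_add_of_le (Nat.le_mul_of_pos_left M (by omega) : M ≤ n * M)
  have hcount : countUpTo S (n * M) ≤ M := by
    rw [hk, countUpTo_add, Finset.filter_false_of_mem fun m hm hmS => ?_, Finset.card_empty,
      add_zero]
    · exact countUpTo_le S M
    · have := hgap m hmS (Finset.mem_Ioc.1 hm).1
      have := (Finset.mem_Ioc.1 hm).2
      omega
  have hlt := hN₀ (n * M) ((le_max_left _ _).trans (hn.trans (Nat.le_mul_of_pos_right n hM)))
  have hn0 : (0 : ℝ) < n := by exact_mod_cast (show 0 < n by omega)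
  have : (countUpTo S (n * M) : ℝ) / ↑(n * M) ≤ (n : ℝ)⁻¹ := by
    rw [Nat.cast_mul, div_le_iff₀ (mul_pos hn0 (by exact_mod_cast hM)),
      inv_mul_cancel_left₀ hn0.ne']
    exact_mod_cast hcount
  linarith [inv_lt_of_inv_lt₀ hδ hnδ]

end Density

section ResidueSets

lemma Nat.choose_le_two_pow_pred (n k : ℕ) : n.choose k ≤ 2 ^ (n - 1) := by
  rcases n with _ | m
  · rcases k with _ | k <;> simp
  rcases k with _ | j
  · simp [Nat.one_le_two_pow]
  rw [Nat.choose_succ_succ, Nat.add_sub_cancel]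
  rcases lt_or_ge j m with h | h
  · rw [← Nat.sum_range_choose]
    exact Finset.add_le_sum (fun _ _ => Nat.zero_le _) (Finset.mem_range.2 (by omega))
      (Finset.mem_range.2 (by omega)) (by omega)
  · rw [Nat.choose_eq_zero_of_lt (n := m) (k := j + 1) (by omega), add_zero]
    exact Nat.choose_le_two_pow m j

def halfResidueSets (p : ℕ) : Finset (Finset ℕ) := (Finset.range p).powersetCard ((p + 1) / 2)

/-- An enumeration of `halfResidueSets p`; out of range it returns a fixed member. -/
noncomputable def halfResidueSet (p i : ℕ) : Finset ℕ :=
  (halfResidueSets p).toList.getD i (Finset.range ((p + 1) / 2))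

lemma halfResidueSet_mem (p i : ℕ) : halfResidueSet p i ∈ halfResidueSets p := by
  unfold halfResidueSet
  rcases lt_or_ge i (halfResidueSets p).toList.length with h | h
  · rw [List.getD_eq_getElem _ _ h]
    exact Finset.mem_toList.1 (List.getElem_mem h)
  · rw [List.getD_eq_default _ _ h]
    exact Finset.mem_powersetCard.2 ⟨Finset.range_subset_range.2 (by omega), Finset.card_range _⟩

lemma exists_halfResidueSet_eq {p : ℕ} {G : Finset ℕ} (hG : G ∈ halfResidueSets p) :
    ∃ i < 2 ^ (p - 1), halfResidueSet p i = G := by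
  obtain ⟨i, hi, rfl⟩ := List.mem_iff_getElem.1 (Finset.mem_toList.2 hG)
  refine ⟨i, hi.trans_le ?_, List.getD_eq_getElem _ _ hi⟩
  rw [Finset.length_toList, halfResidueSets, Finset.card_powersetCard, Finset.card_range]
  exact Nat.choose_le_two_pow_pred _ _

end ResidueSets

section Windows

variable (J : ℕ → ℕ)

def scale (n s : ℕ) : ℕ := (n + 1) ^ s * J n

/-- Window `n` is cut into the segments `(scale J n s, scale J n (s + 1)]`,
`2 ^ (J n - 1) ≤ s < 2 ^ J n`; on the `i`-th of them only the residues mod `J n` in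
`halfResidueSet (J n) i` are kept. Windows are disjoint and window `n` ends at
`(n + 1) ^ 2 ^ J n * J n`, the time horizon of hypothesis (b). -/
def windowedResidueSet : Set ℕ :=
  {m | ∀ n s, 2 ^ (J n - 1) ≤ s → s < 2 ^ J n → scale J n s < m → m ≤ scale J n (s + 1) →
    m % J n ∈ halfResidueSet (J n) (s - 2 ^ (J n - 1))}

variable {J}

lemma scale_mono (n : ℕ) : Monotone (scale J n) := fun _ _ h =>
  Nat.mul_le_mul_right _ (Nat.pow_le_pow_right n.succ_pos h)

lemma le_scale (n s : ℕ) : J n ≤ scale J n s :=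
  Nat.le_mul_of_pos_left _ (pow_pos n.succ_pos s)

lemma scale_succ (n s : ℕ) : scale J n (s + 1) = scale J n s + n * (n + 1) ^ s * J n := by
  simp only [scale]
  ring

lemma scale_succ_eq_mul (n s : ℕ) : scale J n (s + 1) = (n + 1) * scale J n s := by
  simp only [scale]
  ring

lemma scale_le_scale_of_lt (hJ : StrictMono J) {n n' s s' : ℕ} (h : n < n') (hs : s ≤ 2 ^ J n)
    (hs' : 2 ^ (J n' - 1) ≤ s') : scale J n s ≤ scale J n' s' := by
  have hJnn' := hJ h
  calc scale J n s ≤ scale J n (2 ^ J n) := scale_mono n hs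
    _ ≤ scale J n' (2 ^ (J n' - 1)) := by
      refine Nat.mul_le_mul ?_ hJnn'.le
      exact (Nat.pow_le_pow_left (show n + 1 ≤ n' + 1 by omega) _).trans
        (Nat.pow_le_pow_right n'.succ_pos (Nat.pow_le_pow_right two_pos (by omega)))
    _ ≤ scale J n' s' := scale_mono n' hs'

lemma windowStart_le_scale (hJ : StrictMono J) {n n' s' : ℕ} (h : n ≤ n')
    (hs' : 2 ^ (J n' - 1) ≤ s') : scale J n (2 ^ (J n - 1)) ≤ scale J n' s' := by
  rcases h.eq_or_lt with rfl | h
  · exact scale_mono n hs'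
  · exact scale_le_scale_of_lt hJ h (Nat.pow_le_pow_right two_pos (Nat.sub_le _ _)) hs'

lemma scale_le_windowEnd (hJ : StrictMono J) {n n' s' : ℕ} (h : n' ≤ n) (hs' : s' ≤ 2 ^ J n') :
    scale J n' s' ≤ scale J n (2 ^ J n) := by
  rcases h.eq_or_lt with rfl | h
  · exact scale_mono n' hs'
  · exact scale_le_scale_of_lt hJ h hs' (Nat.pow_le_pow_right two_pos (Nat.sub_le _ _))

lemma mem_windowedResidueSet_of_mem_segment (hJ : StrictMono J) {n s m : ℕ}
    (hs₁ : 2 ^ (J n - 1) ≤ s) (hs₂ : s < 2 ^ J n) (hm₁ : scale J n s < m)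
    (hm₂ : m ≤ scale J n (s + 1)) (hres : m % J n ∈ halfResidueSet (J n) (s - 2 ^ (J n - 1))) :
    m ∈ windowedResidueSet J := by
  intro n' s' hs₁' hs₂' hm₁' hm₂'
  obtain ⟨rfl, rfl⟩ : n' = n ∧ s' = s := by
    rcases lt_trichotomy n' n with h | rfl | h
    · have := scale_le_scale_of_lt hJ (s := s' + 1) h hs₂' hs₁
      omega
    · rcases lt_trichotomy s' s with h | rfl | h
      · have := scale_mono (J := J) n' (show s' + 1 ≤ s from h)
        omega
      · exact ⟨rfl, rfl⟩
      · have := scale_mono (J := J) n' (show s + 1 ≤ s' from h)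
        omega
    · have := scale_le_scale_of_lt hJ (s := s + 1) h hs₂ hs₁'
      omega
  exact hres

lemma mem_windowedResidueSet_of_le_windowStart_one (hJ : StrictMono J) {m : ℕ}
    (hm : m ≤ scale J 1 (2 ^ (J 1 - 1))) : m ∈ windowedResidueSet J := by
  intro n s hs₁ _ hm₁ hm₂
  rcases Nat.eq_zero_or_pos n with rfl | hn
  · simp only [scale, zero_add, one_pow] at hm₁ hm₂
    omega
  · have := windowStart_le_scale hJ (show 1 ≤ n from hn) hs₁
    omega

lemma mem_windowedResidueSet_of_mem_gap (hJ : StrictMono J) {n m : ℕ}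
    (hm₁ : scale J n (2 ^ J n) < m) (hm₂ : m ≤ scale J (n + 1) (2 ^ (J (n + 1) - 1))) :
    m ∈ windowedResidueSet J := by
  intro n' s' hs₁' hs₂' hm₁' hm₂'
  rcases le_or_gt n' n with h | h
  · have := scale_le_windowEnd hJ (s' := s' + 1) h hs₂'
    omega
  · have := windowStart_le_scale hJ (show n + 1 ≤ n' from h) hs₁'
    omega

end Windows

section WindowedDensity

variable {J : ℕ → ℕ}

lemma Nat.exists_lt_le_succ (f : ℕ → ℕ) {a b N : ℕ} (hab : a ≤ b) (ha : f a < N)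
    (hb : N ≤ f b) : ∃ k, a ≤ k ∧ k < b ∧ f k < N ∧ N ≤ f (k + 1) := by
  induction b, hab using Nat.le_induction with
  | base => omega
  | succ b hab ih =>
    by_cases hfb : f b < N
    · exact ⟨b, hab, b.lt_succ_self, hfb, hb⟩
    · obtain ⟨k, hak, hkb, hk⟩ := ih (not_lt.1 hfb)
      exact ⟨k, hak, hkb.trans b.lt_succ_self, hk⟩

lemma countUpTo_segment (hJ : StrictMono J) {n s : ℕ} (hn : 0 < J n) (hs₁ : 2 ^ (J n - 1) ≤ s)
    (hs₂ : s < 2 ^ J n) (hM : scale J n s ≤ 2 * countUpTo (windowedResidueSet J) (scale J n s)) :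
    scale J n (s + 1) ≤ 2 * countUpTo (windowedResidueSet J) (scale J n (s + 1)) ∧
      ∀ N, scale J n s ≤ N → N ≤ scale J n (s + 1) →
        N ≤ 4 * countUpTo (windowedResidueSet J) N := by
  have hE := Finset.mem_powersetCard.1 (halfResidueSet_mem (J n) (s - 2 ^ (J n - 1)))
  rw [scale_succ]
  exact countUpTo_residue_block hn ((le_scale n s).trans (Nat.le_succ _)) hE.1 (by omega) hM
    fun m hm₁ hm₂ hres =>
      mem_windowedResidueSet_of_mem_segment hJ hs₁ hs₂ hm₁ (by rwa [scale_succ]) hres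

lemma countUpTo_window (hJ : StrictMono J) {n : ℕ} (hn : 1 ≤ n)
    (hB : scale J n (2 ^ (J n - 1)) ≤
      2 * countUpTo (windowedResidueSet J) (scale J n (2 ^ (J n - 1))))
    {s : ℕ} (hs₁ : 2 ^ (J n - 1) ≤ s) (hs₂ : s ≤ 2 ^ J n) :
    scale J n s ≤ 2 * countUpTo (windowedResidueSet J) (scale J n s) := by
  induction s, hs₁ using Nat.le_induction with
  | base => exact hB
  | succ s hs ih =>
    exact (countUpTo_segment hJ (hn.trans (hJ.id_le n)) hs hs₂ (ih (by omega))).1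

lemma countUpTo_windowStart (hJ : StrictMono J) {n : ℕ} (hn : 1 ≤ n) :
    scale J n (2 ^ (J n - 1)) ≤
      2 * countUpTo (windowedResidueSet J) (scale J n (2 ^ (J n - 1))) := by
  induction n, hn using Nat.le_induction with
  | base =>
    exact (countUpTo_full_block (Nat.zero_le _) (by simp) fun m _ hm =>
      mem_windowedResidueSet_of_le_windowStart_one hJ hm).1
  | succ n hn ih =>
    exact (countUpTo_full_block (scale_le_scale_of_lt hJ n.lt_succ_self le_rfl le_rfl)
      (countUpTo_window hJ hn ih (Nat.pow_le_pow_right two_pos (Nat.sub_le _ _)) le_rfl)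
      fun m hm₁ hm₂ => mem_windowedResidueSet_of_mem_gap hJ hm₁ hm₂).1

lemma le_four_mul_countUpTo_windowedResidueSet (hJ : StrictMono J) (N : ℕ) :
    N ≤ 4 * countUpTo (windowedResidueSet J) N := by
  rcases le_or_gt N (scale J 1 (2 ^ (J 1 - 1))) with hN | hN
  · exact (countUpTo_full_block (Nat.zero_le _) (by simp) fun m _ hm =>
      mem_windowedResidueSet_of_le_windowStart_one hJ hm).2 N (Nat.zero_le _) hN
  obtain ⟨n, hn, -, hBn, hBn₁⟩ := Nat.exists_lt_le_succ (fun n => scale J n (2 ^ (J n - 1)))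
    (show 1 ≤ N by omega) hN ((hJ.id_le N).trans (le_scale N _))
  have hpow : 2 ^ (J n - 1) ≤ 2 ^ J n := Nat.pow_le_pow_right two_pos (Nat.sub_le _ _)
  have hB := countUpTo_windowStart hJ hn
  rcases le_or_gt N (scale J n (2 ^ J n)) with hNL | hLN
  · obtain ⟨s, hs₁, hs₂, hsN, hNs⟩ := Nat.exists_lt_le_succ (scale J n) hpow hBn hNL
    exact (countUpTo_segment hJ (hn.trans (hJ.id_le n)) hs₁ hs₂
      (countUpTo_window hJ hn hB hs₁ hs₂.le)).2 N hsN.le hNs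
  · exact (countUpTo_full_block (scale_le_scale_of_lt hJ n.lt_succ_self le_rfl le_rfl)
      (countUpTo_window hJ hn hB hpow le_rfl)
      fun m hm₁ hm₂ => mem_windowedResidueSet_of_mem_gap hJ hm₁ hm₂).2 N hLN.le hBn₁

lemma lowerDensity_windowedResidueSet_pos (hJ : StrictMono J) :
    0 < lowerDensity (windowedResidueSet J) :=
  lt_of_lt_of_le (by norm_num) (inv_le_lowerDensity (c := 4) four_pos
    (le_four_mul_countUpTo_windowedResidueSet hJ))

end WindowedDensity

lemma exists_mem_residues_of_forall_exists_mem_Ioc {J : ℕ → ℕ} {n : ℕ} (hJn : 0 < J n)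
    {S : Set ℕ} (hS : ∀ M, 0 < M → ∃ m ∈ S ∩ windowedResidueSet J, M < m ∧ m ≤ (n + 1) * M)
    {G : Finset ℕ} (hG : G ⊆ Finset.range (J n)) (hcard : (J n + 1) / 2 ≤ G.card) :
    ∃ m ∈ S, m ≤ (n + 1) ^ (2 ^ J n) * J n ∧ m % J n ∈ G := by
  obtain ⟨G', hG'G, hG'⟩ := Finset.exists_subset_card_eq hcard
  obtain ⟨i, hi, hiG'⟩ :=
    exists_halfResidueSet_eq (Finset.mem_powersetCard.2 ⟨hG'G.trans hG, hG'⟩)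
  have hs : 2 ^ (J n - 1) + i < 2 ^ J n := by
    have := Nat.two_pow_pred_add_two_pow_pred hJn
    omega
  obtain ⟨m, ⟨hmS, hmA⟩, hm₁, hm₂⟩ :=
    hS (scale J n (2 ^ (J n - 1) + i)) (hJn.trans_le (le_scale n _))
  rw [← scale_succ_eq_mul] at hm₂
  refine ⟨m, hmS, hm₂.trans (scale_mono n hs), hG'G ?_⟩
  simpa [hiG'] using hmA n _ le_self_add hs hm₁ hm₂

lemma false_of_residues_separating {J : ℕ → ℕ} {n : ℕ} (hJn : 0 < J n) {S₀ S₁ : Set ℕ}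
    (h₀ : ∀ M, 0 < M → ∃ m ∈ S₀ ∩ windowedResidueSet J, M < m ∧ m ≤ (n + 1) * M)
    (h₁ : ∀ M, 0 < M → ∃ m ∈ S₁ ∩ windowedResidueSet J, M < m ∧ m ≤ (n + 1) * M)
    {F : Finset ℕ} (hF : F ⊆ Finset.range (J n))
    (hsep : ∀ j ≤ (n + 1) ^ (2 ^ J n) * J n, (j ∈ S₀ → j % J n ∈ F) ∧ (j ∈ S₁ → j % J n ∉ F)) :
    False := by
  rcases le_or_gt ((J n + 1) / 2) F.card with hbig | hsmall
  · obtain ⟨m, hm, hmL, hmF⟩ := exists_mem_residues_of_forall_exists_mem_Ioc hJn h₁ hF hbig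
    exact (hsep m hmL).2 hm hmF
  · obtain ⟨m, hm, hmL, hmF⟩ := exists_mem_residues_of_forall_exists_mem_Ioc hJn h₀
      (Finset.sdiff_subset (s := Finset.range (J n)) (t := F))
      (by rw [Finset.card_sdiff_of_subset hF, Finset.card_range]; omega)
    exact (Finset.mem_sdiff.1 hmF).2 ((hsep m hmL).1 hm)

theorem not_frequentlyHypercyclic_along_some_set_general
    {X : Type*} [NormedAddCommGroup X] [NormedSpace ℝ X] [CompleteSpace X]
    (e : ℕ → X) (a : ℕ → X → ℝ)
    (hrepr : ∀ x : X,
      Tendsto (fun K : ℕ => ∑ k ∈ Finset.range K, a k x • e k) atTop (nhds x))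
    (huniq : ∀ (x : X) (b : ℕ → ℝ),
      Tendsto (fun K : ℕ => ∑ k ∈ Finset.range K, b k • e k) atTop (nhds x) →
      ∀ k, b k = a k x)
    (π : ℕ → X → X)
    (hπ : ∀ (K : ℕ) (x : X), π K x = ∑ k ∈ Finset.range K, a k x • e k)
    (T : X →L[ℝ] X) (K J : ℕ → ℕ) (hK : StrictMono K) (hJ : StrictMono J)
    (ha : ∀ n, 1 ≤ n → ∀ x : X, (T ^ (J n)) (π (K n) x) = π (K n) x)
    (hb : ∀ n, 1 ≤ n → ∀ x : X, ∀ j ≤ (n + 1) ^ (2 ^ (J n)) * J n,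
      ‖π (K n) ((T ^ j) (x - π (K n) x))‖ ≤ ‖x - π (K n) x‖) :
    ∃ A : Set ℕ, 0 < lowerDensity A ∧
      ¬ ∃ x : X, ∀ V : Set X, IsOpen V → V.Nonempty →
          0 < lowerDensity ({n : ℕ | (T ^ n) x ∈ V} ∩ A) := by
  replace hrepr : HasCoordinateExpansion e a := hrepr
  replace huniq : HasUniqueCoordinates e a := huniq
  obtain ⟨P, C, hP, hPC⟩ := exists_partialSum_clm_norm_le hrepr huniq
  obtain rfl : π = fun K => ⇑(P K) := funext₂ fun K x => (hπ K x).trans (hP K x).symm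
  refine ⟨windowedResidueSet J, lowerDensity_windowedResidueSet_pos hJ, fun ⟨x, hx⟩ => ?_⟩
  have he₀ : 0 < ‖e 0‖ := norm_pos_iff.2 (huniq.basis_ne_zero 0)
  obtain ⟨r, hr, hCr⟩ := exists_pos_mul_lt (by positivity : (0 : ℝ) < ‖e 0‖ / 4) C
  have hvisits := fun v : X => eventually_exists_mem_Ioc_mul
    (hx (Metric.ball v r) Metric.isOpen_ball ⟨v, Metric.mem_ball_self hr⟩)
  have hclose : ∀ᶠ n in atTop, ‖x - P (K n) x‖ < ‖e 0‖ / 4 := by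
    have hlim : Tendsto (fun n => P (K n) x) atTop (𝓝 x) := by
      simpa only [hP, Function.comp_def] using (hrepr x).comp hK.tendsto_atTop
    simpa only [norm_sub_rev] using (tendsto_iff_norm_sub_tendsto_zero.1 hlim).eventually
      (gt_mem_nhds (by positivity : (0 : ℝ) < ‖e 0‖ / 4))
  obtain ⟨n, hn, h₀, h₁, hxn⟩ := (eventually_ge_atTop 1 |>.and <|
    (tendsto_add_atTop_nat 1).eventually (hvisits 0) |>.and <|
    (tendsto_add_atTop_nat 1).eventually (hvisits (e 0)) |>.and hclose).exists
  have hJn : 0 < J n := hn.trans (hJ.id_le n)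
  obtain ⟨F, hF, hsep⟩ := exists_residues_separating_visits (P (K n)) T (v := e 0) (r := r) hJn
    (ha n hn x) (hb n hn x) (by rw [hP]; exact huniq.partialSum_basis (hn.trans (hK.id_le n)))
    (by linarith [mul_le_mul_of_nonneg_right (hPC (K n)) hr.le])
  exact false_of_residues_separating hJn h₀ h₁ hF hsep

/-- Let `X` be a Banach space with a Schauder basis `(e_k)` (with coordinate functionals
`a k` and canonical projections `π K x = Σ_{k<K} (a k x) • e k`), and let `T` be a bounded
operator on `X`. Suppose there are increasing sequences of positive integers `(K_n)`, `(J_n)`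
such that for every `n ≥ 1`: (a) `T^{J_n} π_{K_n} = π_{K_n}`, and
(b) `‖π_{K_n} T^j (I − π_{K_n}) x‖ ≤ ‖(I − π_{K_n}) x‖` for all `x` and
`0 ≤ j ≤ (n+1)^{2^{J_n}} J_n`. Then there is a set `A ⊆ ℕ` of positive lower density along
which `T` is not frequently hypercyclic. -/
theorem not_frequentlyHypercyclic_along_some_set
    {X : Type*} [NormedAddCommGroup X] [NormedSpace ℝ X] [CompleteSpace X]
    (e : ℕ → X) (a : ℕ → X → ℝ)
    (hrepr : ∀ x : X,
      Tendsto (fun K : ℕ => ∑ k ∈ Finset.range K, a k x • e k) atTop (nhds x))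
    (huniq : ∀ (x : X) (b : ℕ → ℝ),
      Tendsto (fun K : ℕ => ∑ k ∈ Finset.range K, b k • e k) atTop (nhds x) →
      ∀ k, b k = a k x)
    (π : ℕ → X → X)
    (hπ : ∀ (K : ℕ) (x : X), π K x = ∑ k ∈ Finset.range K, a k x • e k)
    (T : X →L[ℝ] X) (K J : ℕ → ℕ) (hK : StrictMono K) (hJ : StrictMono J)
    (hKpos : ∀ n, 1 ≤ n → 0 < K n) (hJpos : ∀ n, 1 ≤ n → 0 < J n)
    (ha : ∀ n, 1 ≤ n → ∀ x : X, (T ^ (J n)) (π (K n) x) = π (K n) x)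
    (hb : ∀ n, 1 ≤ n → ∀ x : X, ∀ j ≤ (n + 1) ^ (2 ^ (J n)) * J n,
      ‖π (K n) ((T ^ j) (x - π (K n) x))‖ ≤ ‖x - π (K n) x‖) :
    ∃ A : Set ℕ, 0 < lowerDensity A ∧
      ¬ ∃ x : X, ∀ V : Set X, IsOpen V → V.Nonempty →
          0 < lowerDensity ({n : ℕ | (T ^ n) x ∈ V} ∩ A) :=
  not_frequentlyHypercyclic_along_some_set_general e a hrepr huniq π hπ T K J hK hJ ha hb
end

section
/- Let X be a Polish topological vector space, let T be a continuous linear operator on X, and let F be the Furstenberg family of all infinite subsets of ℕ. Then T is hereditarily F-hypercyclic if and only if T is topologically mixing. -/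
open Filter Topology Set
open scoped Classical

/-!
Mixing ⇒ hereditarily hypercyclic is a Baire category argument: for each `i` and `m` the points
`x` with `fⁿ x ∈ Vᵢ` for some `n ∈ Aᵢ`, `n ≥ m`, form an open set, which is dense because for
every non-empty open `W` the cofinite set `N(W, Vᵢ)` meets the infinite set `Aᵢ ∩ [m, ∞)`.

Conversely, if `A = ℕ \ N(U, V)` were infinite, pick `x` whose orbit visits `U` and visits `V`
at times in every shift `A + m`. If `fᵐ x ∈ U`, a visit to `V` at time `a + m` with `a ∈ A`
puts `a` in `N(U, V)`.
-/

namespace Function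

variable {X : Type*} [TopologicalSpace X] (f : X → X)

/-- The set `N(U, V)` of the paper. -/
def hittingTimes (U V : Set X) : Set ℕ :=
  {n | ∃ x ∈ U, f^[n] x ∈ V}

def IsTopologicallyMixing : Prop :=
  ∀ U V : Set X, IsOpen U → U.Nonempty → IsOpen V → V.Nonempty → (hittingTimes f U V)ᶜ.Finite

/-- Hereditary hypercyclicity for the Furstenberg family of infinite subsets of `ℕ`. -/
def IsHereditarilyInfiniteHypercyclic : Prop :=
  ∀ (I : Type) [Countable I] (V : I → Set X) (A : I → Set ℕ),
    (∀ i, IsOpen (V i)) → (∀ i, (V i).Nonempty) → (∀ i, (A i).Infinite) →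
    ∃ x : X, ∀ i, ({n | f^[n] x ∈ V i} ∩ A i).Infinite

variable {f}

theorem IsHereditarilyInfiniteHypercyclic.isTopologicallyMixing
    (h : IsHereditarilyInfiniteHypercyclic f) : IsTopologicallyMixing f := by
  intro U V hU hUne hV hVne
  by_contra hA
  set A := (hittingTimes f U V)ᶜ
  obtain ⟨x, hx⟩ := h (Option ℕ) (fun i => i.elim U fun _ => V)
    (fun i => i.elim univ fun m => (· + m) '' A)
    (by rintro (_ | _) <;> assumption) (by rintro (_ | _) <;> assumption)
    (by rintro (_ | m); exacts [infinite_univ, Infinite.image (add_left_injective m).injOn hA])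
  obtain ⟨m, hmU, -⟩ := (hx none).nonempty
  obtain ⟨-, hV, a, haA, rfl⟩ := (hx (some m)).nonempty
  exact haA ⟨f^[m] x, hmU, by rwa [← iterate_add_apply]⟩

theorem IsTopologicallyMixing.dense_biUnion_preimage_iterate (h : IsTopologicallyMixing f)
    {V : Set X} (hV : IsOpen V) (hVne : V.Nonempty) {A : Set ℕ} (hA : A.Infinite) (m : ℕ) :
    Dense (⋃ n ∈ A ∩ Ici m, f^[n] ⁻¹' V) := by
  refine dense_iff_inter_open.2 fun W hW hWne => ?_
  have hWV : ∀ᶠ n in atTop, n ∈ hittingTimes f W V := by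
    rw [← Nat.cofinite_eq_atTop, eventually_cofinite]
    exact h W V hW hWne hV hVne
  obtain ⟨n, hmn, hnA, y, hyW, hyV⟩ :=
    (Nat.frequently_atTop_iff_infinite.2 hA |>.and_eventually hWV).forall_exists_of_atTop m
  exact ⟨y, hyW, mem_biUnion ⟨hnA, hmn⟩ hyV⟩

theorem IsTopologicallyMixing.isHereditarilyInfiniteHypercyclic [BaireSpace X] [Nonempty X]
    (hf : Continuous f) (h : IsTopologicallyMixing f) : IsHereditarilyInfiniteHypercyclic f := by
  intro I _ V A hV hVne hA
  have hdense : Dense (⋂ p : I × ℕ, ⋃ n ∈ A p.1 ∩ Ici p.2, f^[n] ⁻¹' V p.1) :=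
    dense_iInter_of_isOpen (fun p => isOpen_biUnion fun n _ => (hV p.1).preimage (hf.iterate n))
      fun p => h.dense_biUnion_preimage_iterate (hV p.1) (hVne p.1) (hA p.1) p.2
  obtain ⟨x, hx⟩ := hdense.nonempty
  refine ⟨x, fun i => Nat.frequently_atTop_iff_infinite.1 <| frequently_atTop.2 fun m => ?_⟩
  obtain ⟨n, ⟨hnA, hmn⟩, hnV⟩ := mem_iUnion₂.1 (mem_iInter.1 hx (i, m))
  exact ⟨n, hmn, hnV, hnA⟩

theorem isHereditarilyInfiniteHypercyclic_iff_isTopologicallyMixing [BaireSpace X] [Nonempty X]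
    (hf : Continuous f) : IsHereditarilyInfiniteHypercyclic f ↔ IsTopologicallyMixing f :=
  ⟨IsHereditarilyInfiniteHypercyclic.isTopologicallyMixing,
    IsTopologicallyMixing.isHereditarilyInfiniteHypercyclic hf⟩

end Function

theorem hereditarily_infinite_hypercyclic_iff_mixing_general
    {X : Type*} [TopologicalSpace X] [AddCommGroup X] [Module ℝ X]
    [PolishSpace X]
    (T : X →L[ℝ] X) :
    (∀ (I : Type) [Countable I] (V : I → Set X) (A : I → Set ℕ),
      (∀ i, IsOpen (V i)) → (∀ i, (V i).Nonempty) → (∀ i, (A i).Infinite) →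
      ∃ x : X, ∀ i, (visitSet T x (V i) ∩ A i).Infinite) ↔
    (∀ U V : Set X, IsOpen U → U.Nonempty → IsOpen V → V.Nonempty →
      ({n : ℕ | ∃ x ∈ U, (T ^ n) x ∈ V}ᶜ).Finite) := by
  simp only [visitSet, FunLike.coe_pow_eq_iterate]
  exact Function.isHereditarilyInfiniteHypercyclic_iff_isTopologicallyMixing T.continuous

/-- For the Furstenberg family `F` of all infinite subsets of `ℕ`, a continuous linear
operator `T` on a Polish topological vector space is hereditarily `F`-hypercyclic if and
only if it is topologically mixing (`N(U,V)` is cofinite for all non-empty open `U, V`). -/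
theorem hereditarily_infinite_hypercyclic_iff_mixing
    {X : Type*} [TopologicalSpace X] [AddCommGroup X] [Module ℝ X]
    [IsTopologicalAddGroup X] [ContinuousSMul ℝ X] [PolishSpace X]
    (T : X →L[ℝ] X) :
    (∀ (I : Type) [Countable I] (V : I → Set X) (A : I → Set ℕ),
      (∀ i, IsOpen (V i)) → (∀ i, (V i).Nonempty) → (∀ i, (A i).Infinite) →
      ∃ x : X, ∀ i, (visitSet T x (V i) ∩ A i).Infinite) ↔
    (∀ U V : Set X, IsOpen U → U.Nonempty → IsOpen V → V.Nonempty →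
      ({n : ℕ | ∃ x ∈ U, (T ^ n) x ∈ V}ᶜ).Finite) :=
  hereditarily_infinite_hypercyclic_iff_mixing_general T
end
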